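/- arXiv:0804.3633 — 10 statements merged into one kernel-verified Lean document; each statement's English description precedes it below -/
import Mathlib

section
/- Let R be a commutative ring and M a finite free R-module of rank N. Let k ≥ 1, let v₁, …, v_k ∈ M and φ₁, …, φ_k : M →ₗ[R] R be linear functionals with φᵢ(vᵢ) = 0 for all i, and let n₁, …, n_k be integers. Let f be the composite (id + n₁·(φ₁⊗v₁)) ∘ (id + n₂·(φ₂⊗v₂)) ∘ ⋯ ∘ (id + n_k·(φ_k⊗v_k)) (so the k-th factor is applied first). Then trace(f) = N + Σ n_{i₁}·n_{i₂}·⋯·n_{i_m} · φ_{i_m}(v_{i₁}) · φ_{i_{m-1}}(v_{i_m}) · φ_{i_{m-2}}(v_{i_{m-1}}) · ⋯ · φ_{i₁}(v_{i₂}), where the sum runs over all subsets {i₁ < i₂ < ⋯ < i_m} of {1, …, k} of size m ≥ 2. -/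
open LinearMap

section ListAux

lemma prod_map_smul {ι A : Type*} [Ring A] (n : ι → ℤ) (f : ι → A) :
    ∀ L : List ι, (L.map fun i => n i • f i).prod = (L.map n).prod • (L.map f).prod := by
  intro L
  induction L with
  | nil => simp
  | cons a L ih =>
    simp only [List.map_cons, List.prod_cons, ih, smul_mul_assoc, mul_smul_comm, mul_smul]
    rw [smul_comm]

lemma prod_one_add_list {ι A : Type*} [Ring A] (f : ι → A) :
    ∀ L : List ι, (L.map fun i => 1 + f i).prod
      = (L.sublists.map fun s => (s.map f).prod).sum := by
  intro L
  induction L with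
  | nil => simp
  | cons a L ih =>
    rw [List.map_cons, List.prod_cons, ih,
      List.Perm.sum_eq (List.Perm.map _ (List.sublists_cons_perm_append a L))]
    rw [List.map_append, List.sum_append, add_mul, one_mul, List.map_map]
    congr 1
    rw [← List.sum_map_mul_left]
    congr 1

lemma sum_sublists_finRange {A : Type*} [AddCommMonoid A] (k : ℕ) (g : List (Fin k) → A) :
    ((List.finRange k).sublists.map g).sum
      = ∑ s ∈ (Finset.univ : Finset (Fin k)).powerset, g (Finset.sort s (· ≤ ·)) := by
  rw [← List.sum_toFinset _ ((List.nodup_sublists).2 (List.nodup_finRange k))]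
  refine Finset.sum_bij' (fun L _ => L.toFinset) (fun s _ => s.sort (· ≤ ·)) ?_ ?_ ?_ ?_ ?_
  · intro L _
    exact Finset.mem_powerset.2 (Finset.subset_univ _)
  · intro s _
    rw [List.mem_toFinset, List.mem_sublists]
    refine List.sublist_of_subperm_of_pairwise
      (List.subperm_of_subset (Finset.sort_nodup s _) (fun x _ => List.mem_finRange x))
      (Finset.pairwise_sort s _) ?_
    exact (List.pairwise_lt_finRange k).imp le_of_lt
  · intro L hL
    rw [List.mem_toFinset, List.mem_sublists] at hL
    exact (List.toFinset_sort (· ≤ ·) (hL.nodup (List.nodup_finRange k))).2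
      (((List.pairwise_lt_finRange k).sublist hL).imp le_of_lt)
  · intro s _
    exact Finset.sort_toFinset s _
  · intro L hL
    rw [List.mem_toFinset, List.mem_sublists] at hL
    rw [(List.toFinset_sort (· ≤ ·) (hL.nodup (List.nodup_finRange k))).2
      (((List.pairwise_lt_finRange k).sublist hL).imp le_of_lt)]

end ListAux

section TraceAux
variable {R : Type*} [CommRing R] {M : Type*} [AddCommGroup M] [Module R M]

lemma smulRight_mul_smulRight (φ ψ : M →ₗ[R] R) (a b : M) :
    ((φ.smulRight a : Module.End R M) * ψ.smulRight b) = φ b • ψ.smulRight a := by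
  ext x
  simp [Module.End.mul_apply, smul_smul, mul_comm]

lemma core_prod {ι : Type*} (φ : ι → (M →ₗ[R] R)) (v : ι → M) :
    ∀ (m : ℕ) (σ : Fin (m + 1) → ι),
      (List.ofFn (fun j => ((φ (σ j)).smulRight (v (σ j)) : Module.End R M))).prod
        = (∏ j : Fin m, φ (σ j.castSucc) (v (σ j.succ))) •
            (φ (σ (Fin.last m))).smulRight (v (σ 0)) := by
  intro m
  induction m with
  | zero => intro σ; simp
  | succ m ih =>
    intro σ
    rw [List.ofFn_succ]
    have := ih (σ ∘ Fin.succ)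
    simp only [Function.comp] at this
    rw [List.prod_cons, this, mul_smul_comm, smulRight_mul_smulRight, smul_smul,
      Fin.prod_univ_succ, Fin.succ_last]
    simp only [Fin.castSucc_zero, Fin.succ_castSucc]
    rw [mul_comm]

variable [Module.Free R M] [Module.Finite R M]

lemma trace_smulRight' (φ : M →ₗ[R] R) (a : M) :
    LinearMap.trace R M (φ.smulRight a) = φ a := by
  have h : (φ.smulRight a) = dualTensorHom R M M (φ ⊗ₜ a) := by ext x; simp
  rw [h, trace_eq_contract_apply, contractLeft_apply]

lemma trace_term {k c : ℕ} (hc : 0 < c)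
    (v : Fin k → M) (φ : Fin k → (M →ₗ[R] R)) (n : Fin k → ℤ)
    (s : Finset (Fin k)) (hm : s.card = c) :
    LinearMap.trace R M
        (((s.sort (· ≤ ·)).map (fun i => n i • (φ i).smulRight (v i))).prod)
      = (∏ i ∈ s, n i) •
          ∏ j : Fin c, φ (s.orderEmbOfFin hm j) (v (s.orderEmbOfFin hm (finRotate c j))) := by
  obtain ⟨m, rfl⟩ : ∃ m, c = m + 1 := ⟨c - 1, (Nat.succ_pred_eq_of_pos hc).symm⟩
  set σ : Fin (m + 1) → Fin k := fun j => s.orderEmbOfFin hm j with hσ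
  have hsort : s.sort (· ≤ ·) = List.ofFn σ := by
    apply List.ext_getElem
    · simp [hm]
    · intro i h1 h2
      rw [List.getElem_ofFn]
      simp only [hσ]
      rw [Finset.orderEmbOfFin_apply]
      simp
  rw [hsort, prod_map_smul, LinearMap.map_smul_of_tower, List.map_ofFn, List.map_ofFn]
  rw [show ((fun i => (φ i).smulRight (v i)) ∘ σ) = fun j => (φ (σ j)).smulRight (v (σ j)) from rfl,
    core_prod φ v m σ, map_smul, trace_smulRight']
  have h1 : (List.ofFn (n ∘ σ)).prod = ∏ i ∈ s, n i := by
    rw [List.prod_ofFn, ← Finset.prod_coe_sort s n]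
    exact Equiv.prod_comp (s.orderIsoOfFin hm).toEquiv (fun x => n (x : Fin k))
  have h2 : ∏ j : Fin (m + 1), φ (σ j) (v (σ (finRotate (m + 1) j)))
      = (∏ j : Fin m, φ (σ j.castSucc) (v (σ j.succ))) * φ (σ (Fin.last m)) (v (σ 0)) := by
    rw [Fin.prod_univ_castSucc]
    congr 1
    · refine Finset.prod_congr rfl (fun j _ => ?_)
      rw [finRotate_succ_apply, Fin.coeSucc_eq_succ]
    · rw [finRotate_last]
  rw [h1, h2]
  rw [smul_eq_mul]

end TraceAux

/-- Trace formula for a product of `k` "transvection-like" endomorphisms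
`id + nᵢ·(φᵢ⊗vᵢ)` with `φᵢ(vᵢ) = 0`, on a finite free module of rank `N`:
the trace is `N` plus a sum of cyclic products over all subsets of size at least `2`. -/
theorem trace_prod_transvections
    (R : Type*) [CommRing R] (M : Type*) [AddCommGroup M] [Module R M]
    [Module.Free R M] [Module.Finite R M] (N : ℕ) (hN : Module.finrank R M = N)
    (k : ℕ) (hk : 1 ≤ k) (v : Fin k → M) (φ : Fin k → (M →ₗ[R] R))
    (hφ : ∀ i, φ i (v i) = 0) (n : Fin k → ℤ) :
    LinearMap.trace R M
        (List.ofFn (fun i : Fin k =>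
          (1 : Module.End R M) + n i • ((φ i).smulRight (v i)))).prod
      = (N : R) +
        ∑ s ∈ Finset.univ.powerset.filter (fun s : Finset (Fin k) => 2 ≤ s.card),
          (∏ i ∈ s, n i) •
            ∏ j : Fin s.card,
              φ ((s.orderIsoOfFin rfl) j : Fin k)
                (v ((s.orderIsoOfFin rfl) (finRotate s.card j) : Fin k)) := by
  set T : Fin k → Module.End R M := fun i => n i • (φ i).smulRight (v i) with hT
  rw [List.ofFn_eq_map, prod_one_add_list T (List.finRange k),
    sum_sublists_finRange k (fun L => ((L.map T)).prod), map_sum]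
  rw [← Finset.sum_filter_add_sum_filter_not
    (Finset.univ.powerset) (fun s : Finset (Fin k) => 2 ≤ s.card)]
  rw [add_comm]
  congr 1
  · -- small subsets sum to N
    refine Finset.sum_eq_single_of_mem ∅ ?_ ?_ |>.trans ?_
    · simp
    · intro s hs hne
      simp only [Finset.mem_filter, not_le] at hs
      have h1 : s.card = 1 := by
        have := hs.2
        have hpos : 0 < s.card := Finset.card_pos.2 (Finset.nonempty_iff_ne_empty.2 hne)
        omega
      rw [trace_term (by omega : (0:ℕ) < 1) v φ n s h1]
      obtain ⟨i, rfl⟩ := Finset.card_eq_one.1 h1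
      simp [Finset.orderEmbOfFin_singleton, hφ i]
    · rw [Finset.sort_empty]
      simp [hN]
  · -- big subsets
    refine Finset.sum_congr rfl (fun s hs => ?_)
    simp only [Finset.mem_filter] at hs
    rw [trace_term (by omega : 0 < s.card) v φ n s rfl]
    simp [Finset.coe_orderIsoOfFin_apply]
end

section
/- Let R be a commutative ring and M a finite free R-module of rank N. Let v₁, v₂ ∈ M and φ₁, φ₂ : M →ₗ[R] R with φ₁(v₁) = 0 and φ₂(v₂) = 0. Set A₁ = φ₁⊗v₁ and A₂ = φ₂⊗v₂, so that A₁² = A₂² = 0 and (id + Aᵢ) is invertible with inverse (id − Aᵢ). Then the trace of the commutator (id + A₁) ∘ (id + A₂) ∘ (id − A₁) ∘ (id − A₂) equals N + (φ₂(v₁)·φ₁(v₂))². -/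
open LinearMap

lemma trace_smulRight'_s2 (R : Type*) [CommRing R] (M : Type*) [AddCommGroup M] [Module R M]
    [Module.Free R M] [Module.Finite R M] (φ : M →ₗ[R] R) (v : M) :
    LinearMap.trace R M (φ.smulRight v) = φ v := by
  have : φ.smulRight v = dualTensorHom R M M (φ ⊗ₜ v) := by
    ext x; simp
  rw [this, LinearMap.trace_eq_contract_apply, contractLeft_apply]

lemma smulRight_mul (R : Type*) [CommRing R] (M : Type*) [AddCommGroup M] [Module R M]
    (φ ψ : M →ₗ[R] R) (v w : M) :
    (φ.smulRight v * ψ.smulRight w : Module.End R M) = φ w • ψ.smulRight v := by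
  ext x
  simp [Module.End.mul_apply, smul_smul, mul_comm]

/-- Trace of the multiplicative commutator `(id+A₁)(id+A₂)(id−A₁)(id−A₂)` of two
rank-one "transvections" `Aᵢ = φᵢ⊗vᵢ` with `φᵢ(vᵢ) = 0`, on a finite free module of
rank `N`: it equals `N + (φ₂(v₁)·φ₁(v₂))²`. -/
theorem trace_commutator_transvections
    (R : Type*) [CommRing R] (M : Type*) [AddCommGroup M] [Module R M]
    [Module.Free R M] [Module.Finite R M] (N : ℕ) (hN : Module.finrank R M = N)
    (v₁ v₂ : M) (φ₁ φ₂ : M →ₗ[R] R) (h₁ : φ₁ v₁ = 0) (h₂ : φ₂ v₂ = 0) :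
    LinearMap.trace R M
        ((1 + φ₁.smulRight v₁) * (1 + φ₂.smulRight v₂) *
          (1 - φ₁.smulRight v₁) * (1 - φ₂.smulRight v₂) : Module.End R M)
      = (N : R) + (φ₂ v₁ * φ₁ v₂) ^ 2 := by
  set A : Module.End R M := φ₁.smulRight v₁ with hA
  set B : Module.End R M := φ₂.smulRight v₂ with hB
  have hAA : A * A = 0 := by rw [hA, smulRight_mul, h₁, zero_smul]
  have hBB : B * B = 0 := by rw [hB, smulRight_mul, h₂, zero_smul]
  have hABe : A * B = φ₁ v₂ • (φ₂.smulRight v₁) := by rw [hA, hB, smulRight_mul]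
  have hBAe : B * A = φ₂ v₁ • (φ₁.smulRight v₂) := by rw [hA, hB, smulRight_mul]
  have key : (1 + A) * (1 + B) * (1 - A) * (1 - B)
      = 1 + A * B - B * A + B * (A * B) - A * (B * A) + (A * B) * (A * B) := by
    have : ∀ x y : Module.End R M, x * x = 0 → y * y = 0 →
        (1 + x) * (1 + y) * (1 - x) * (1 - y)
        = 1 + x * y - y * x + y * (x * y) - x * (y * x) + (x * y) * (x * y) := by
      intro x y hx hy
      have h1 : x * (x * y) = 0 := by rw [← mul_assoc, hx, zero_mul]
      have h2 : x * (y * y) = 0 := by rw [hy, mul_zero]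
      noncomm_ring
      rw [h1, h2, hx, hy]
      simp
    exact this A B hAA hBB
  rw [key]
  have hBAB : B * (A * B) = (φ₂ v₁ * φ₁ v₂) • B := by
    rw [hABe, mul_smul_comm, hB, smulRight_mul, smul_smul, mul_comm]
  have hABA : A * (B * A) = (φ₁ v₂ * φ₂ v₁) • A := by
    rw [hBAe, mul_smul_comm, hA, smulRight_mul, smul_smul, mul_comm]
  have hABAB : (A * B) * (A * B) = (φ₁ v₂ * φ₁ v₂ * φ₂ v₁) • (φ₂.smulRight v₁) := by
    rw [hABe, smul_mul_assoc, mul_smul_comm, smulRight_mul, smul_smul, smul_smul, mul_assoc]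
  rw [hBAB, hABA, hABAB]
  simp only [map_add, map_sub, map_smul, LinearMap.trace_one, hN]
  rw [LinearMap.trace_mul_comm R A B]
  rw [hA, hB, trace_smulRight'_s2 R M φ₁ v₁, trace_smulRight'_s2 R M φ₂ v₂,
    trace_smulRight'_s2 R M φ₂ v₁, h₁, h₂]
  simp only [smul_eq_mul]
  ring
end

section
/- Let R be a commutative integral domain of characteristic zero and let M be an n × n matrix over R. Suppose there exists a nonzero polynomial P ∈ ℤ[X] such that P(M) = 0 as a matrix (evaluating P at M via the unique ring map ℤ → R). Then the trace of M is algebraic over ℤ: there exists a nonzero polynomial Q ∈ ℤ[X] with Q(tr M) = 0 in R. -/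
open Polynomial Matrix

/-- Roots of the characteristic polynomial of a matrix annihilated by a polynomial are
roots of that polynomial. -/
lemma aux_root_of_charpoly_root {K : Type*} [Field K] {n : ℕ}
    (N : Matrix (Fin n) (Fin n) K) (p : K[X]) (hpN : Polynomial.aeval N p = 0)
    {μ : K} (hμ : N.charpoly.IsRoot μ) : p.eval μ = 0 := by
  have hdet : (Matrix.scalar (Fin n) μ - N).det = 0 := by
    have h := hμ
    rw [Matrix.charpoly, Polynomial.IsRoot, _root_.eval_det,
      Matrix.matPolyEquiv_charmatrix] at h
    simpa using h
  obtain ⟨v, hv, hvEq⟩ := (Matrix.exists_mulVec_eq_zero_iff).mpr hdet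
  have hev : N.mulVec v = μ • v := by
    have h1 : (Matrix.scalar (Fin n) μ).mulVec v - N.mulVec v = 0 := by
      rw [← Matrix.sub_mulVec, hvEq]
    have h2 : (Matrix.scalar (Fin n) μ).mulVec v = μ • v := by
      ext i
      simp [Matrix.scalar, Matrix.mulVec, dotProduct, Matrix.diagonal_apply,
        Finset.sum_ite_eq, mul_comm]
    rw [h2, sub_eq_zero] at h1
    exact h1.symm
  have hvec : Module.End.HasEigenvector (Matrix.toLinAlgEquiv' N) μ v :=
    ⟨Module.End.mem_eigenspace_iff.mpr (by rw [Matrix.toLinAlgEquiv'_apply, hev]), hv⟩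
  have h3 : Polynomial.aeval (Matrix.toLinAlgEquiv' N) p v = p.eval μ • v :=
    Module.End.aeval_apply_of_hasEigenvector hvec
  have h4 : Polynomial.aeval (Matrix.toLinAlgEquiv' N) p = 0 := by
    rw [Polynomial.aeval_algHom_apply (Matrix.toLinAlgEquiv' (R := K) (n := Fin n)) N p,
      hpN, map_zero]
  rw [h4] at h3
  have h5 : p.eval μ • v = 0 := h3.symm
  rcases smul_eq_zero.mp h5 with h | h
  · exact h
  · exact absurd h hv


lemma aux_rat_of_int {K : Type*} [Field K] [Algebra ℚ K] {x : K}
    (P : Polynomial ℤ) (hP : P ≠ 0) (h : Polynomial.eval₂ (Int.castRingHom K) x P = 0) :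
    IsAlgebraic ℚ x := by
  refine ⟨P.map (Int.castRingHom ℚ), ?_, ?_⟩
  · rw [Ne, Polynomial.map_eq_zero_iff (f := Int.castRingHom ℚ) Int.cast_injective]
    exact hP
  · rw [Polynomial.aeval_def, Polynomial.eval₂_map,
      Subsingleton.elim ((algebraMap ℚ K).comp (Int.castRingHom ℚ)) (Int.castRingHom K)]
    exact h

lemma aux_int_of_rat {K : Type*} [Field K] [Algebra ℚ K] {x : K}
    (h : IsAlgebraic ℚ x) :
    ∃ Q : Polynomial ℤ, Q ≠ 0 ∧ Polynomial.eval₂ (Int.castRingHom K) x Q = 0 := by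
  obtain ⟨q, hq, hq0⟩ := h
  refine ⟨IsLocalization.integerNormalization (nonZeroDivisors ℤ) q, ?_, ?_⟩
  · rw [Ne, IsFractionRing.integerNormalization_eq_zero_iff]
    exact hq
  · have := IsLocalization.integerNormalization_eval₂_eq_zero (nonZeroDivisors ℤ)
      (algebraMap ℚ K) q (x := x) (by rwa [Polynomial.aeval_def] at hq0)
    rw [Subsingleton.elim (Int.castRingHom K) ((algebraMap ℚ K).comp (algebraMap ℤ ℚ))]
    exact this

/-- If a square matrix over an integral domain of characteristic zero is annihilated by a
nonzero integer polynomial, then its trace is algebraic over `ℤ`. -/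
theorem trace_algebraic_of_annihilated
    (R : Type*) [CommRing R] [IsDomain R] [CharZero R] (n : ℕ)
    (M : Matrix (Fin n) (Fin n) R) (P : Polynomial ℤ) (hP : P ≠ 0)
    (hPM : Polynomial.aeval M P = 0) :
    ∃ Q : Polynomial ℤ, Q ≠ 0 ∧ Polynomial.aeval M.trace Q = 0 := by
  classical
  set F := FractionRing R
  set K := AlgebraicClosure F
  set φ : R →+* K := (algebraMap F K).comp (algebraMap R F) with hφ
  have hφinj : Function.Injective φ :=
    (RingHom.injective (algebraMap F K)).comp (IsFractionRing.injective R F)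
  haveI : CharZero K := ⟨fun a b hab => by
    have h : φ (a : R) = φ (b : R) := by rw [map_natCast, map_natCast]; exact hab
    exact Nat.cast_injective (hφinj h)⟩
  haveI : IsScalarTower ℤ ℚ K := ⟨fun x y z => by
    rw [zsmul_eq_mul, zsmul_eq_mul, Algebra.smul_def, Algebra.smul_def, _root_.map_mul,
      map_intCast, mul_assoc]⟩
  -- map M to K
  set N : Matrix (Fin n) (Fin n) K := M.map φ with hN
  have hPN : Polynomial.aeval N P = 0 := by
    have h := congrArg (RingHom.mapMatrix φ) hPM
    rw [map_zero, Polynomial.aeval_def, Polynomial.hom_eval₂] at h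
    rw [Polynomial.aeval_def,
      Subsingleton.elim (algebraMap ℤ (Matrix (Fin n) (Fin n) K))
        ((RingHom.mapMatrix φ).comp (algebraMap ℤ (Matrix (Fin n) (Fin n) R)))]
    exact h
  -- each root of charpoly N is algebraic over ℚ
  have hroots : ∀ μ ∈ N.charpoly.roots, IsAlgebraic ℚ μ := by
    intro μ hμ
    have hroot : N.charpoly.IsRoot μ := (Polynomial.isRoot_of_mem_roots hμ)
    have hPN' : Polynomial.aeval N (P.map (algebraMap ℤ K)) = 0 := by
      rw [Polynomial.aeval_map_algebraMap]; exact hPN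
    have hpe : (P.map (algebraMap ℤ K)).eval μ = 0 :=
      aux_root_of_charpoly_root N _ hPN' hroot
    refine aux_rat_of_int P hP ?_
    rw [Polynomial.eval₂_eq_eval_map, Subsingleton.elim (Int.castRingHom K) (algebraMap ℤ K)]
    exact hpe
  -- trace N is the sum of roots, hence algebraic over ℚ
  have htr : N.trace = N.charpoly.roots.sum := Matrix.trace_eq_sum_roots_charpoly N
  have halg : IsAlgebraic ℚ N.trace := by
    rw [htr]
    rw [isAlgebraic_iff_isIntegral]
    have : N.charpoly.roots.sum ∈ integralClosure ℚ K := by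
      apply Subalgebra.multiset_sum_mem
      intro μ hμ
      exact isAlgebraic_iff_isIntegral.mp (hroots μ hμ)
    exact this
  -- pull back to R
  have htrmap : N.trace = φ M.trace := by
    simp [Matrix.trace, hN, Matrix.map_apply, map_sum]
  rw [htrmap] at halg
  obtain ⟨Q, hQ, hQ0⟩ := aux_int_of_rat halg
  refine ⟨Q, hQ, ?_⟩
  apply hφinj
  rw [map_zero, Polynomial.aeval_def, Polynomial.hom_eval₂,
    Subsingleton.elim (φ.comp (algebraMap ℤ R)) (Int.castRingHom K)]
  exact hQ0
end

section
/- Let H be a finitely generated free abelian group and R = ℤ[H] its integral group ring. Let M be an n × n matrix over R and suppose there exists a nonzero polynomial P ∈ ℤ[X] with P(M) = 0 as a matrix (evaluating via the unique ring map ℤ → R). Then there exists m ∈ ℤ such that tr M = m·1 in R. -/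
set_option maxHeartbeats 1000000
set_option synthInstance.maxHeartbeats 400000

open Polynomial

section OrderedLemmas

variable {G : Type*} [AddCommGroup G] [LinearOrder G] [IsOrderedAddMonoid G]

lemma aux_mul_apply_of_max (p q : AddMonoidAlgebra ℤ G) (a b : G)
    (hp : ∀ x ∈ p.coeff.support, x ≤ a) (hq : ∀ y ∈ q.coeff.support, y ≤ b) :
    (p * q).coeff (a + b) = p.coeff a * q.coeff b := by
  classical
  rw [AddMonoidAlgebra.coeff_mul, Finsupp.sum, Finset.sum_eq_single a]
  · rw [Finsupp.sum, Finset.sum_eq_single b]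
    · rw [if_pos rfl]
    · intro y hy hyb
      exact if_neg fun he => (add_lt_add_right ((hq y hy).lt_of_ne hyb) a).ne he
    · intro hb
      rw [if_pos rfl, Finsupp.notMem_support_iff.1 hb, mul_zero]
  · intro x hx hxa
    refine Finset.sum_eq_zero fun y hy => if_neg fun he => ?_
    exact (add_lt_add_of_lt_of_le ((hp x hx).lt_of_ne hxa) (hq y hy)).ne he
  · intro ha
    refine Finset.sum_eq_zero fun y _ => ?_
    simp [Finsupp.notMem_support_iff.1 ha]

lemma aux_pow_support_le (t : AddMonoidAlgebra ℤ G) (a : G)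
    (ht : ∀ x ∈ t.coeff.support, x ≤ a) (k : ℕ) :
    ∀ x ∈ (t ^ k).coeff.support, x ≤ k • a := by
  induction k with
  | zero =>
    intro x hx
    have : x ∈ ((1 : AddMonoidAlgebra ℤ G)).coeff.support := by simpa using hx
    rw [AddMonoidAlgebra.one_def, AddMonoidAlgebra.coeff_single] at this
    have := Finsupp.support_single_subset this
    simp only [Finset.mem_singleton] at this
    simp [this]
  | succ k ih =>
    intro x hx
    rw [pow_succ] at hx
    have := AddMonoidAlgebra.support_coeff_mul_subset (t ^ k) t hx
    rw [Finset.mem_add] at this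
    obtain ⟨y, hy, z, hz, rfl⟩ := this
    rw [succ_nsmul]
    exact add_le_add (ih y hy) (ht z hz)

lemma aux_pow_apply (t : AddMonoidAlgebra ℤ G) (a : G)
    (ht : ∀ x ∈ t.coeff.support, x ≤ a) (k : ℕ) :
    (t ^ k).coeff (k • a) = (t.coeff a) ^ k := by
  induction k with
  | zero => simp [AddMonoidAlgebra.one_def, AddMonoidAlgebra.coeff_single, Finsupp.single_apply]
  | succ k ih =>
    rw [pow_succ, succ_nsmul,
      aux_mul_apply_of_max (t ^ k) t (k • a) a (aux_pow_support_le t a ht k) ht, ih, pow_succ]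

lemma aux_aeval_ne_zero (t : AddMonoidAlgebra ℤ G) (a : G)
    (ha : a ∈ t.coeff.support) (hmax : ∀ x ∈ t.coeff.support, x ≤ a) (hpos : 0 < a)
    (Q : Polynomial ℤ) (hQ : Q ≠ 0) :
    Polynomial.aeval t Q ≠ 0 := by
  intro h0
  set N := Q.natDegree with hN
  have hsum : Polynomial.aeval t Q
      = ∑ i ∈ Finset.range (N + 1), Q.coeff i • t ^ i :=
    Polynomial.aeval_eq_sum_range t
  have happ : (Polynomial.aeval t Q).coeff (N • a) = Q.coeff N * (t.coeff a) ^ N := by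
    rw [hsum, AddMonoidAlgebra.coeff_sum, Finsupp.finset_sum_apply, Finset.sum_eq_single N]
    · rw [AddMonoidAlgebra.coeff_smul, Finsupp.smul_apply, aux_pow_apply t a hmax N, smul_eq_mul]
    · intro i hi hiN
      have hilt : i < N := by
        rcases lt_or_eq_of_le (Nat.lt_succ_iff.1 (Finset.mem_range.1 hi)) with h | h
        · exact h
        · exact absurd h hiN
      rw [AddMonoidAlgebra.coeff_smul, Finsupp.smul_apply]
      have hz : (t ^ i).coeff (N • a) = 0 := by
        rw [← Finsupp.notMem_support_iff]
        intro hmem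
        have h1 : N • a ≤ i • a := aux_pow_support_le t a hmax i _ hmem
        have h2 : i • a < N • a := nsmul_lt_nsmul_left hpos hilt
        exact absurd h1 (not_le.2 h2)
      rw [hz, smul_zero]
    · intro h
      exact absurd (Finset.self_mem_range_succ N) h
  rw [h0] at happ
  have hc : Q.coeff N ≠ 0 := by
    simpa [hN] using Polynomial.leadingCoeff_ne_zero.2 hQ
  have hta : t.coeff a ≠ 0 := Finsupp.mem_support_iff.1 ha
  exact (mul_ne_zero hc (pow_ne_zero N hta)) (by simpa using happ.symm)

lemma aux_single_zero_eq (m : ℤ) :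
    (AddMonoidAlgebra.single 0 m : AddMonoidAlgebra ℤ G) = algebraMap ℤ (AddMonoidAlgebra ℤ G) m := by
  have h1 : (AddMonoidAlgebra.single 0 m : AddMonoidAlgebra ℤ G)
      = AddMonoidAlgebra.singleZeroRingHom m := rfl
  rw [h1, eq_intCast, eq_intCast (algebraMap ℤ (AddMonoidAlgebra ℤ G)) m]

lemma aux_exists_int_of_aeval_eq_zero (t : AddMonoidAlgebra ℤ G)
    (Q : Polynomial ℤ) (hQ : Q ≠ 0) (h : Polynomial.aeval t Q = 0) :
    ∃ m : ℤ, t = algebraMap ℤ (AddMonoidAlgebra ℤ G) m := by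
  classical
  by_cases hsupp : t.coeff.support ⊆ ({0} : Finset G)
  · refine ⟨t.coeff 0, ?_⟩
    rw [← aux_single_zero_eq (G := G) (t.coeff 0)]
    exact AddMonoidAlgebra.coeff_injective (Finsupp.support_subset_singleton.mp hsupp)
  · exfalso
    obtain ⟨b, hb, hb0⟩ := Finset.not_subset.1 hsupp
    rw [Finset.mem_singleton] at hb0
    have hne : t.coeff.support.Nonempty := ⟨b, hb⟩
    set a := t.coeff.support.max' hne with ha
    by_cases hpos : 0 < a
    · exact aux_aeval_ne_zero t a (t.coeff.support.max'_mem hne)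
        (fun x hx => t.coeff.support.le_max' x hx) hpos Q hQ h
    · -- all elements of the support are ≤ a ≤ 0; use the negation ring hom
      push_neg at hpos
      set φ := AddMonoidAlgebra.mapDomainAlgHom ℤ ℤ (negAddMonoidHom (α := G))
      set t' := φ t with ht'
      have hsupp' : t'.coeff.support = t.coeff.support.image (fun x => -x) := by
        rw [ht']
        have : (φ t).coeff = Finsupp.mapDomain (fun x : G => -x) t.coeff := rfl
        rw [this, Finsupp.mapDomain_support_of_injective neg_injective]
      set c := t.coeff.support.min' hne with hc
      have hcneg : c < 0 := by
        have hba : b ≤ a := t.coeff.support.le_max' b hb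
        have hcb : c ≤ b := t.coeff.support.min'_le b hb
        rcases lt_or_eq_of_le (hcb.trans (hba.trans hpos)) with h' | h'
        · exact h'
        · -- c = 0 : then b between c=0 and a ≤ 0 means b = 0, contradiction
          exfalso
          apply hb0
          have h0b : (0 : G) ≤ b := h'.symm ▸ hcb
          exact le_antisymm (hba.trans hpos) h0b
      have hmem' : -c ∈ t'.coeff.support := by
        rw [hsupp', Finset.mem_image]
        exact ⟨c, t.coeff.support.min'_mem hne, rfl⟩
      have hmax' : ∀ x ∈ t'.coeff.support, x ≤ -c := by
        intro x hx
        rw [hsupp', Finset.mem_image] at hx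
        obtain ⟨y, hy, rfl⟩ := hx
        exact neg_le_neg (t.coeff.support.min'_le y hy)
      have haeval' : Polynomial.aeval t' Q = 0 := by
        rw [ht', Polynomial.aeval_algHom_apply, h, map_zero]
      exact aux_aeval_ne_zero t' (-c) hmem' hmax' (by simpa using hcneg) Q hQ haeval'

end OrderedLemmas

section Step1

lemma aux_pow_mulVec {n : ℕ} {S : Type*} [CommRing S]
    (A : Matrix (Fin n) (Fin n) S) (v : Fin n → S) (μ : S)
    (h : A.mulVec v = μ • v) (k : ℕ) :
    (A ^ k).mulVec v = μ ^ k • v := by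
  induction k with
  | zero => simp [Matrix.one_mulVec]
  | succ k ih =>
    rw [pow_succ, ← Matrix.mulVec_mulVec, h, Matrix.mulVec_smul, ih, pow_succ]
    rw [smul_smul, mul_comm]

lemma aux_sum_mulVec {n : ℕ} {S : Type*} [CommRing S] (s : Finset ℕ)
    (f : ℕ → Matrix (Fin n) (Fin n) S) (v : Fin n → S) :
    (∑ i ∈ s, f i).mulVec v = ∑ i ∈ s, (f i).mulVec v := by
  classical
  induction s using Finset.induction with
  | empty => simp [Matrix.zero_mulVec]
  | insert _ _ hmem ih =>
    rw [Finset.sum_insert hmem, Finset.sum_insert hmem, Matrix.add_mulVec, ih]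

lemma aux_aeval_mulVec {n : ℕ} {S : Type*} [CommRing S]
    (A : Matrix (Fin n) (Fin n) S) (v : Fin n → S) (μ : S)
    (h : A.mulVec v = μ • v) (P : Polynomial ℤ) :
    (Polynomial.aeval A P).mulVec v = (Polynomial.aeval μ P) • v := by
  rw [Polynomial.aeval_eq_sum_range (p := P) A, Polynomial.aeval_eq_sum_range (p := P) μ,
    aux_sum_mulVec, Finset.sum_smul]
  refine Finset.sum_congr rfl fun i _ => ?_
  rw [Matrix.smul_mulVec, aux_pow_mulVec A v μ h i, smul_assoc]

lemma aux_eval_int_poly_at_root {n : ℕ} {L : Type*} [Field L]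
    (M' : Matrix (Fin n) (Fin n) L) (P : Polynomial ℤ)
    (hPM' : Polynomial.aeval M' P = 0)
    {μ : L} (hμ : μ ∈ M'.charpoly.roots) :
    Polynomial.aeval μ P = 0 := by
  classical
  have hroot : M'.charpoly.IsRoot μ := (Polynomial.mem_roots'.1 hμ).2
  have hdet : (Matrix.scalar (Fin n) μ - M').det = 0 := by
    have he := eval_det (Matrix.charmatrix M') μ
    rw [Matrix.matPolyEquiv_charmatrix, Polynomial.eval_sub, Polynomial.eval_X,
      Polynomial.eval_C] at he
    rw [Matrix.charpoly, Polynomial.IsRoot] at hroot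
    rw [hroot] at he
    exact he.symm
  obtain ⟨v, hv0, hv⟩ := Matrix.exists_mulVec_eq_zero_iff.2 hdet
  have hMv : M'.mulVec v = μ • v := by
    rw [Matrix.sub_mulVec] at hv
    have h1 : (Matrix.scalar (Fin n) μ).mulVec v = μ • v := by
      funext x
      rw [Matrix.scalar_apply, Matrix.mulVec_diagonal]
      simp
    rw [h1] at hv
    exact (sub_eq_zero.1 hv).symm
  have hkey := aux_aeval_mulVec M' v μ hMv P
  rw [hPM', Matrix.zero_mulVec] at hkey
  rcases smul_eq_zero.1 hkey.symm with h | h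
  · exact h
  · exact absurd h hv0

lemma aux_map_aeval {R S : Type*} [CommRing R] [CommRing S] (f : R →+* S)
    {n : ℕ} (M : Matrix (Fin n) (Fin n) R) (P : Polynomial ℤ) :
    Polynomial.aeval (M.map f) P = (Polynomial.aeval M P).map f := by
  have h := Polynomial.aeval_algHom_apply
    ((f.mapMatrix (m := Fin n)).toIntAlgHom) M P
  simp [RingHom.mapMatrix_apply] at h
  exact h

lemma aux_trace_alg' {R L : Type*} [CommRing R] [Field L] [CharZero L] [IsAlgClosed L]
    (ι : R →+* L) (hι : Function.Injective ι)
    (n : ℕ) (M : Matrix (Fin n) (Fin n) R)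
    (P : Polynomial ℤ) (hP : P ≠ 0) (hPM : Polynomial.aeval M P = 0) :
    ∃ Q : Polynomial ℤ, Q ≠ 0 ∧ Polynomial.aeval M.trace Q = 0 := by
  classical
  set M' := M.map ι with hM'
  have hPM' : Polynomial.aeval M' P = 0 := by
    rw [hM']
    exact (aux_map_aeval ι M P).trans (by rw [hPM, Matrix.map_zero _ (map_zero ι)])
  have hroots : ∀ μ ∈ M'.charpoly.roots, IsIntegral ℚ μ := by
    intro μ hμ
    have heval := aux_eval_int_poly_at_root M' P hPM' hμ
    have halgZ : IsAlgebraic ℤ μ := ⟨P, hP, heval⟩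
    have halgQ : IsAlgebraic ℚ μ := (IsFractionRing.isAlgebraic_iff ℤ ℚ L).1 halgZ
    exact isAlgebraic_iff_isIntegral.1 halgQ
  have htr : M'.trace = M'.charpoly.roots.sum := Matrix.trace_eq_sum_roots_charpoly M'
  have hint : IsIntegral ℚ M'.trace := by
    rw [htr]
    exact Subalgebra.multiset_sum_mem (integralClosure ℚ L) fun x hx => hroots x hx
  have halgZ : IsAlgebraic ℤ M'.trace :=
    (IsFractionRing.isAlgebraic_iff ℤ ℚ L).2 hint.isAlgebraic
  obtain ⟨Q, hQ0, hQ⟩ := halgZ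
  refine ⟨Q, hQ0, ?_⟩
  have htrmap : M'.trace = ι M.trace := by
    rw [hM']
    simp [Matrix.trace, Matrix.diag, map_sum]
  rw [htrmap] at hQ
  have h := Polynomial.aeval_algHom_apply (ι.toIntAlgHom) M.trace Q
  rw [RingHom.toIntAlgHom_coe] at h
  apply hι
  rw [← h, hQ, map_zero]

lemma aux_trace_alg {R : Type*} [CommRing R] [IsDomain R] [CharZero R]
    (n : ℕ) (M : Matrix (Fin n) (Fin n) R)
    (P : Polynomial ℤ) (hP : P ≠ 0) (hPM : Polynomial.aeval M P = 0) :
    ∃ Q : Polynomial ℤ, Q ≠ 0 ∧ Polynomial.aeval M.trace Q = 0 := by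
  haveI : CharZero (FractionRing R) :=
    charZero_of_injective_algebraMap (IsFractionRing.injective R (FractionRing R))
  haveI : CharZero (AlgebraicClosure (FractionRing R)) :=
    charZero_of_injective_algebraMap
      (algebraMap (FractionRing R) (AlgebraicClosure (FractionRing R))).injective
  refine aux_trace_alg'
    ((algebraMap (FractionRing R) (AlgebraicClosure (FractionRing R))).comp
      (algebraMap R (FractionRing R))) ?_ n M P hP hPM
  exact (algebraMap (FractionRing R) (AlgebraicClosure (FractionRing R))).injective.comp
    (IsFractionRing.injective R (FractionRing R))

end Step1

lemma aux_trace_map {R S : Type*} [CommRing R] [CommRing S] (f : R →+* S)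
    {n : ℕ} (M : Matrix (Fin n) (Fin n) R) :
    (M.map f).trace = f M.trace := by
  simp [Matrix.trace, Matrix.diag, map_sum]

lemma aux_main_ordered {G : Type*} [AddCommGroup G] [LinearOrder G] [IsOrderedAddMonoid G]
    (n : ℕ) (M : Matrix (Fin n) (Fin n) (AddMonoidAlgebra ℤ G))
    (P : Polynomial ℤ) (hP : P ≠ 0) (hPM : Polynomial.aeval M P = 0) :
    ∃ m : ℤ, M.trace = algebraMap ℤ (AddMonoidAlgebra ℤ G) m := by
  haveI : IsDomain (AddMonoidAlgebra ℤ G) := NoZeroDivisors.to_isDomain _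
  haveI : CharZero (AddMonoidAlgebra ℤ G) := by
    refine charZero_of_injective_algebraMap (R := ℤ) ?_
    have h : (algebraMap ℤ (AddMonoidAlgebra ℤ G))
        = AddMonoidAlgebra.singleZeroRingHom := Subsingleton.elim _ _
    rw [h]
    intro x y hxy
    have hxy' : (AddMonoidAlgebra.single 0 x : AddMonoidAlgebra ℤ G) = AddMonoidAlgebra.single 0 y := hxy
    exact AddMonoidAlgebra.single_right_injective hxy'
  obtain ⟨Q, hQ0, hQ⟩ := aux_trace_alg n M P hP hPM
  exact aux_exists_int_of_aeval_eq_zero M.trace Q hQ0 hQ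

/-- If a square matrix over the integral group ring of a finitely generated free abelian
group is annihilated by a nonzero integer polynomial, then its trace is an integer. -/
theorem trace_integer_of_annihilated_over_groupRing
    (H : Type*) [AddCommGroup H] [Module.Free ℤ H] [Module.Finite ℤ H]
    (n : ℕ) (M : Matrix (Fin n) (Fin n) (AddMonoidAlgebra ℤ H))
    (P : Polynomial ℤ) (hP : P ≠ 0) (hPM : Polynomial.aeval M P = 0) :
    ∃ m : ℤ, M.trace = algebraMap ℤ (AddMonoidAlgebra ℤ H) m := by
  classical
  set ι := Module.Free.ChooseBasisIndex ℤ H with hι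
  let b : Module.Basis ι ℤ H := Module.Free.chooseBasis ℤ H
  letI : LinearOrder ι := LinearOrder.lift' (Fintype.equivFin ι) (Fintype.equivFin ι).injective
  let e₂ : (ι →₀ ℤ) ≃+ Lex (ι →₀ ℤ) := ⟨toLex, fun _ _ => rfl⟩
  let e : H ≃+ Lex (ι →₀ ℤ) := b.repr.toAddEquiv.trans e₂
  let φ : AddMonoidAlgebra ℤ H ≃ₐ[ℤ] AddMonoidAlgebra ℤ (Lex (ι →₀ ℤ)) :=
    AddMonoidAlgebra.domCongr ℤ ℤ e
  let ρ : AddMonoidAlgebra ℤ H →+* AddMonoidAlgebra ℤ (Lex (ι →₀ ℤ)) := φ.toAlgHom.toRingHom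
  have hρ : ∀ x, ρ x = φ x := fun _ => rfl
  have hPM' : Polynomial.aeval (M.map ρ) P = 0 :=
    (aux_map_aeval ρ M P).trans (by exact (congrArg (fun A => Matrix.map A ρ) hPM).trans (Matrix.map_zero _ (map_zero ρ)))
  obtain ⟨m, hm⟩ := aux_main_ordered n (M.map ρ) P hP hPM'
  rw [aux_trace_map ρ M] at hm
  refine ⟨m, ?_⟩
  calc M.trace = φ.symm (φ M.trace) := (φ.symm_apply_apply _).symm
    _ = φ.symm (algebraMap ℤ (AddMonoidAlgebra ℤ (Lex (ι →₀ ℤ))) m) := by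
        rw [← hρ, hm]
    _ = algebraMap ℤ (AddMonoidAlgebra ℤ H) m := φ.symm.commutes m
end

section
/- Let S be a (not necessarily commutative) ring and let A, B ∈ S satisfy A² = B² = 0. Let k ≥ 1 and let m₁, …, m_k, n₁, …, n_k be integers. Then there exist integers c₂, …, c_k such that A · (∏_{i=1}^k (1 + mᵢ·B)·(1 + nᵢ·A)) · B = A·B + Σ_{j=2}^{k} c_j·(A·B)^j + (∏_{i=1}^k mᵢ·nᵢ)·(A·B)^{k+1}, where the product over i is taken in order from i = 1 to i = k. -/
open Polynomial

lemma expand_word_aux (S : Type*) [Ring S] (A B : S) (hA : A ^ 2 = 0) (hB : B ^ 2 = 0)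
    (l : List (ℤ × ℤ)) :
    ∃ p r : Polynomial ℤ,
      A * (l.map (fun q => (1 + q.1 • B) * (1 + q.2 • A))).prod
        = Polynomial.aeval (A * B) p * A + Polynomial.aeval (A * B) r * (A * B)
      ∧ p.coeff 0 = 1
      ∧ (∀ j, l.length < j → p.coeff j = 0)
      ∧ p.coeff l.length = (l.map fun q => q.1 * q.2).prod
      ∧ (∀ j, l.length ≤ j → r.coeff j = 0) := by
  have hAA : A * A = 0 := by rw [← sq]; exact hA
  have hBB : B * B = 0 := by rw [← sq]; exact hB
  have hAAx : ∀ x : S, A * (A * x) = 0 := fun x => by rw [← mul_assoc, hAA, zero_mul]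
  have hBBx : ∀ x : S, B * (B * x) = 0 := fun x => by rw [← mul_assoc, hBB, zero_mul]
  induction l using List.reverseRecOn with
  | nil =>
    refine ⟨1, 0, by simp, by simp, ?_, by simp, by simp⟩
    intro j hj
    simp only [List.length_nil] at hj
    simp [Polynomial.coeff_one]; omega
  | append_singleton l q ih =>
    obtain ⟨p, r, heq, hp0, hptop, hpk, hrtop⟩ := ih
    obtain ⟨m, n⟩ := q
    refine ⟨p + (m * n) • (p * X) + n • (r * X), r + m • p, ?_, ?_, ?_, ?_, ?_⟩
    · have F1 : A * ((1 + m • B) * (1 + n • A)) = A + m • (A * B) + (m * n) • (A * B * A) := by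
        simp only [mul_add, add_mul, mul_one, one_mul, mul_smul_comm, smul_mul_assoc, mul_assoc,
          hAA, hAAx, hBBx, smul_zero, mul_zero, add_zero, zero_add, smul_smul, mul_comm n m]
      have F2 : (A * B) * ((1 + m • B) * (1 + n • A)) = A * B + n • (A * B * A) := by
        simp only [mul_add, add_mul, mul_one, one_mul, mul_smul_comm, smul_mul_assoc, mul_assoc,
          hAA, hBB, hAAx, hBBx, smul_zero, mul_zero, add_zero, zero_add, smul_smul, mul_comm n m]
      have step : A * ((l.map (fun q => (1 + q.1 • B) * (1 + q.2 • A))).prod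
            * ((1 + m • B) * (1 + n • A)))
          = (Polynomial.aeval (A * B) p * A + Polynomial.aeval (A * B) r * (A * B))
            * ((1 + m • B) * (1 + n • A)) := by
        rw [← mul_assoc, heq]
      rw [List.map_append, List.prod_append, List.map_singleton, List.prod_singleton, step]
      rw [add_mul, mul_assoc, mul_assoc, F1, F2]
      simp only [map_add, map_smul, map_mul, Polynomial.aeval_X, add_mul, smul_mul_assoc]
      rw [mul_add, mul_add, mul_add]
      simp only [mul_smul_comm, smul_smul, mul_assoc]
      abel
    · simp [hp0]
    · intro j hj
      simp only [List.length_append, List.length_singleton] at hj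
      rcases Nat.exists_eq_add_of_lt (Nat.lt_of_lt_of_le (Nat.zero_lt_succ _) hj) with ⟨j', rfl⟩
      simp only [coeff_add, coeff_smul, coeff_mul_X]
      rw [hptop _ (by omega), hptop _ (by omega), hrtop _ (by omega)]
      simp
    · simp only [List.length_append, List.length_singleton, List.map_append, List.prod_append,
        List.map_singleton, List.prod_singleton]
      simp only [coeff_add, coeff_smul, coeff_mul_X]
      rw [hptop _ (by omega), hrtop _ (by omega), hpk]
      simp [mul_comm]
    · intro j hj
      simp only [List.length_append, List.length_singleton] at hj
      simp only [coeff_add, coeff_smul]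
      rw [hrtop _ (by omega), hptop _ (by omega)]
      simp

/-- If `A² = B² = 0` in a ring, then `A·(∏ᵢ (1 + mᵢB)(1 + nᵢA))·B` is a polynomial
expression in `AB` of the form `AB + Σ_{j=2}^{k} cⱼ (AB)^j + (∏ mᵢnᵢ) (AB)^{k+1}`. -/
theorem expand_word_square_zero
    (S : Type*) [Ring S] (A B : S) (hA : A ^ 2 = 0) (hB : B ^ 2 = 0)
    (k : ℕ) (hk : 1 ≤ k) (m n : Fin k → ℤ) :
    ∃ c : ℕ → ℤ,
      A * (List.ofFn (fun i : Fin k => (1 + m i • B) * (1 + n i • A))).prod * B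
        = A * B + (∑ j ∈ Finset.Icc 2 k, c j • (A * B) ^ j)
          + (∏ i, m i * n i) • (A * B) ^ (k + 1) := by
  obtain ⟨p, r, heq, hp0, hptop, hpk, hrtop⟩ :=
    expand_word_aux S A B hA hB (List.ofFn (fun i => (m i, n i)))
  simp only [List.map_ofFn, Function.comp_def, List.length_ofFn] at heq hptop hpk hrtop
  set x := A * B with hx
  have hxB : x * B = 0 := by rw [hx, mul_assoc, ← sq, hB, mul_zero]
  have hmain : A * (List.ofFn (fun i : Fin k => (1 + m i • B) * (1 + n i • A))).prod * B
      = Polynomial.aeval x p * x := by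
    rw [heq, add_mul, mul_assoc, mul_assoc, hxB, mul_zero, add_zero]
  have hdeg : p.natDegree < k + 1 :=
    Nat.lt_succ_of_le (Polynomial.natDegree_le_iff_coeff_eq_zero.mpr hptop)
  have hsum : Polynomial.aeval x p * x = ∑ j ∈ Finset.range (k + 1), p.coeff j • x ^ (j + 1) := by
    rw [Polynomial.aeval_eq_sum_range' hdeg, Finset.sum_mul]
    refine Finset.sum_congr rfl fun j _ => ?_
    rw [smul_mul_assoc, pow_succ]
  refine ⟨fun j => p.coeff (j - 1), ?_⟩
  rw [hmain, hsum]
  have hset : Finset.range (k + 1) = insert 0 (insert k (Finset.Ioo 0 k)) := by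
    ext j; simp; omega
  rw [hset, Finset.sum_insert (by simp; omega), Finset.sum_insert (by simp)]
  have reind : ∑ j ∈ Finset.Ioo 0 k, p.coeff j • x ^ (j + 1)
      = ∑ j ∈ Finset.Icc 2 k, p.coeff (j - 1) • x ^ j := by
    refine Finset.sum_nbij' (fun j => j + 1) (fun j => j - 1) ?_ ?_ ?_ ?_ ?_ <;>
      intro a ha <;> simp at ha ⊢ <;> omega
  rw [reind, hp0, List.prod_ofFn] at *
  rw [hpk]
  simp only [one_smul, pow_one, zero_add]
  abel
end

section
/- Let S be a (not necessarily commutative) ring and let A, B ∈ S satisfy A² = B² = 0. Let k ≥ 1 and let m₁, …, m_k, n₁, …, n_k be nonzero integers, and suppose that ∏_{i=1}^k (1 + mᵢ·B)·(1 + nᵢ·A) = 1 in S (product taken in order from i = 1 to i = k). Then there exists a nonzero polynomial P ∈ ℤ[X] of degree k + 1, with leading coefficient ∏_{i=1}^k mᵢ·nᵢ and with constant coefficient and linear coefficient both zero, such that P(A·B) = 0 in S (evaluating via the ℤ-algebra structure of S). -/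
open Polynomial


noncomputable def wordQuad (M N : ℕ → ℤ) : ℕ → ℤ[X] × ℤ[X] × ℤ[X] × ℤ[X]
  | 0 => (0, 0, 0, 0)
  | (i+1) =>
    ((wordQuad M N i).1 + C (M i) * (wordQuad M N i).2.2.1,
     (wordQuad M N i).2.1 + C (N i) * (wordQuad M N i).2.2.2
       + C (M i * N i) * (1 + X * (wordQuad M N i).2.1),
     (wordQuad M N i).2.2.1 + C (N i) * (1 + X * (wordQuad M N i).1)
       + C (M i * N i) * (X * (wordQuad M N i).2.2.1),
     (wordQuad M N i).2.2.2 + C (M i) * (1 + X * (wordQuad M N i).2.1))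

lemma wordQuad_deg (M N : ℕ → ℤ) (i : ℕ) :
    (wordQuad M N (i+1)).2.1.natDegree ≤ i ∧
    (wordQuad M N (i+1)).2.1.coeff i = ∏ j ∈ Finset.range (i+1), (M j * N j) ∧
    (wordQuad M N (i+1)).2.2.2.natDegree ≤ i := by
  induction i with
  | zero =>
    simp [wordQuad, ← Int.cast_mul, natDegree_intCast]
  | succ i ih =>
    obtain ⟨h1, h2, h3⟩ := ih
    set g := (wordQuad M N (i+1)).2.1 with hgdef
    set l := (wordQuad M N (i+1)).2.2.2 with hldef
    have hXg : (X * g).natDegree ≤ i + 1 := by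
      refine le_trans natDegree_mul_le ?_
      rw [natDegree_X]; omega
    have hg' : (wordQuad M N (i+2)).2.1
        = g + C (N (i+1)) * l + C (M (i+1) * N (i+1)) * (1 + X * g) := rfl
    have hl' : (wordQuad M N (i+2)).2.2.2 = l + C (M (i+1)) * (1 + X * g) := rfl
    have hb : (1 + X * g).natDegree ≤ i + 1 := by
      refine le_trans (natDegree_add_le _ _) ?_
      simpa [natDegree_one] using hXg
    refine ⟨?_, ?_, ?_⟩
    · rw [hg']
      refine le_trans (natDegree_add_le _ _) (max_le (le_trans (natDegree_add_le _ _)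
        (max_le (le_trans h1 (by omega)) (le_trans (natDegree_C_mul_le _ _)
          (le_trans h3 (by omega))))) (le_trans (natDegree_C_mul_le _ _) hb))
    · rw [hg']
      rw [coeff_add, coeff_add, coeff_C_mul, coeff_C_mul, coeff_add, coeff_X_mul,
        coeff_eq_zero_of_natDegree_lt (lt_of_le_of_lt h1 (by omega)),
        coeff_eq_zero_of_natDegree_lt (lt_of_le_of_lt h3 (by omega)), h2,
        coeff_one, Finset.prod_range_succ (fun j => M j * N j) (i+1)]
      norm_num
      ring
    · rw [hl']
      exact le_trans (natDegree_add_le _ _) (max_le (le_trans h3 (by omega))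
        (le_trans (natDegree_C_mul_le _ _) hb))

section Ring
variable {S : Type*} [Ring S] (A B : S)

lemma pow_shiftAB (j : ℕ) : (A * B) ^ j * A = A * (B * A) ^ j := by
  induction j with
  | zero => simp
  | succ j ih =>
    rw [pow_succ, pow_succ, mul_assoc, show A * B * A = A * (B * A) from mul_assoc _ _ _,
      ← mul_assoc, ih, mul_assoc]

lemma aeval_mul_A (p : ℤ[X]) :
    aeval (A * B) p * A = A * aeval (B * A) p := by
  induction p using Polynomial.induction_on' with
  | add p q hp hq => simp [add_mul, mul_add, hp, hq]
  | monomial j c =>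
    simp only [aeval_monomial, algebraMap_int_eq, eq_intCast, mul_assoc, pow_shiftAB]
    rw [← mul_assoc, (Int.cast_commute c A).eq, mul_assoc]

lemma aeval_mul_A' (p : ℤ[X]) (s : S) :
    aeval (A * B) p * (A * s) = A * (aeval (B * A) p * s) := by
  rw [← mul_assoc, aeval_mul_A, mul_assoc]

variable (hA : A * A = 0) (hB : B * B = 0)

include hA in
lemma aeval_BA_mul_A (p : ℤ[X]) :
    aeval (B * A) p * A = p.coeff 0 • A := by
  induction p using Polynomial.induction_on' with
  | add p q hp hq => simp [add_mul, hp, hq, add_smul]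
  | monomial j c =>
    simp only [aeval_monomial, algebraMap_int_eq, eq_intCast, mul_assoc]
    cases j with
    | zero => simp [zsmul_eq_mul, coeff_monomial]
    | succ j =>
      rw [pow_succ, mul_assoc, show B * A * A = B * (A * A) from mul_assoc _ _ _, hA]
      simp [coeff_monomial]

include hA in
lemma aeval_BA_mul_A' (p : ℤ[X]) (s : S) :
    aeval (B * A) p * (A * s) = p.coeff 0 • (A * s) := by
  rw [← mul_assoc, aeval_BA_mul_A A B hA, smul_mul_assoc]

include hA in
lemma A_mul_A (s : S) : A * (A * s) = 0 := by rw [← mul_assoc, hA, zero_mul]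

lemma intCast_mul_eq_smul (c : ℤ) (s : S) : (c : S) * s = c • s := (zsmul_eq_mul s c).symm

lemma mul_intCast_eq_smul (c : ℤ) (s : S) : s * (c : S) = c • s := by
  rw [(Int.cast_commute c s).symm.eq, zsmul_eq_mul]

include hA hB in
lemma word_eq (M N : ℕ → ℤ) (i : ℕ) :
    ((List.range i).map (fun j => (1 + M j • B) * (1 + N j • A))).prod
    = 1 + (A*B) * aeval (A*B) (wordQuad M N i).1
      + (B*A) * aeval (B*A) (wordQuad M N i).2.1
      + A * aeval (B*A) (wordQuad M N i).2.2.1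
      + B * aeval (A*B) (wordQuad M N i).2.2.2 := by
  induction i with
  | zero => simp [wordQuad]
  | succ i ih =>
    rw [List.prod_range_succ, ih]
    simp only [wordQuad, Polynomial.C_mul', map_add, map_smul, map_mul, map_one,
      aeval_X, aeval_one, aeval_C, algebraMap_int_eq, eq_intCast, smul_add,
      mul_intCast_eq_smul, intCast_mul_eq_smul, map_intCast,
      mul_add, add_mul, mul_one, one_mul, smul_mul_assoc, mul_smul_comm, smul_smul,
      mul_assoc,
      aeval_mul_A' A B, aeval_mul_A' B A, aeval_mul_A A B, aeval_mul_A B A,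
      aeval_BA_mul_A' A B hA, aeval_BA_mul_A' B A hB,
      aeval_BA_mul_A A B hA, aeval_BA_mul_A B A hB,
      A_mul_A A hA, A_mul_A B hB, hA, hB,
      zero_mul, mul_zero, add_zero, zero_add, smul_zero, zero_smul]
    module

end Ring

/-- If `A² = B² = 0` in a ring and a nontrivial word `∏ᵢ (1 + mᵢB)(1 + nᵢA)` with all
`mᵢ, nᵢ` nonzero equals `1`, then `A·B` is annihilated by a nonzero integer polynomial of
degree `k + 1`, leading coefficient `∏ mᵢnᵢ`, and vanishing constant and linear terms. -/
theorem annihilating_polynomial_of_word_relation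
    (S : Type*) [Ring S] (A B : S) (hA : A ^ 2 = 0) (hB : B ^ 2 = 0)
    (k : ℕ) (hk : 1 ≤ k) (m n : Fin k → ℤ)
    (hm : ∀ i, m i ≠ 0) (hn : ∀ i, n i ≠ 0)
    (hw : (List.ofFn (fun i : Fin k => (1 + m i • B) * (1 + n i • A))).prod = 1) :
    ∃ P : Polynomial ℤ, P ≠ 0 ∧ P.natDegree = k + 1 ∧
      P.leadingCoeff = ∏ i, m i * n i ∧
      P.coeff 0 = 0 ∧ P.coeff 1 = 0 ∧
      Polynomial.aeval (A * B) P = 0 := by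
  have hA' : A * A = 0 := by rw [← sq]; exact hA
  have hB' : B * B = 0 := by rw [← sq]; exact hB
  set M : ℕ → ℤ := fun j => if h : j < k then m ⟨j, h⟩ else 1 with hM
  set N : ℕ → ℤ := fun j => if h : j < k then n ⟨j, h⟩ else 1 with hN
  have hofn : (List.ofFn (fun i : Fin k => (1 + m i • B) * (1 + n i • A)))
      = (List.range k).map (fun j => (1 + M j • B) * (1 + N j • A)) := by
    refine List.ext_getElem (by simp) (fun j h1 h2 => ?_)
    simp only [List.getElem_ofFn, List.getElem_map, List.getElem_range]
    have hj : j < k := by simpa using h1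
    simp [hM, hN, hj]
  rw [hofn] at hw
  set g : Polynomial ℤ := (wordQuad M N k).2.1 with hg
  -- the key annihilation identity
  have hword := word_eq A B hA' hB' M N k
  rw [hw] at hword
  have h2 := congrArg (fun s => A * s * B) hword
  simp only [mul_one, mul_add, add_mul, one_mul, mul_assoc, smul_mul_assoc, mul_smul_comm,
    aeval_mul_A' A B, aeval_mul_A' B A, aeval_mul_A A B, aeval_mul_A B A,
    aeval_BA_mul_A' A B hA', aeval_BA_mul_A' B A hB',
    aeval_BA_mul_A A B hA', aeval_BA_mul_A B A hB',
    A_mul_A A hA', A_mul_A B hB', hA', hB',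
    zero_mul, mul_zero, add_zero, zero_add, smul_zero, zero_smul] at h2
  have hkey : A * (B * (A * (B * Polynomial.aeval (A*B) g))) = 0 :=
    (left_eq_add.mp h2)
  -- degree bookkeeping
  obtain ⟨k', rfl⟩ : ∃ k', k = k' + 1 := ⟨k - 1, (Nat.succ_pred_eq_of_pos hk).symm⟩
  obtain ⟨hd1, hd2, -⟩ := wordQuad_deg M N k'
  have hprodeq : ∏ j ∈ Finset.range (k' + 1), (M j * N j) = ∏ i, m i * n i := by
    rw [← Fin.prod_univ_eq_prod_range (fun j => M j * N j) (k' + 1)]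
    exact Finset.prod_congr rfl (fun i _ => by simp [hM, hN, i.isLt, Fin.is_le i])
  have hprod_ne : ∏ j ∈ Finset.range (k' + 1), (M j * N j) ≠ 0 := by
    rw [hprodeq]
    exact Finset.prod_ne_zero_iff.mpr fun i _ => mul_ne_zero (hm i) (hn i)
  rw [← hg] at hd1 hd2
  have hcoeff : g.coeff k' ≠ 0 := hd2 ▸ hprod_ne
  have hg0 : g ≠ 0 := fun h0 => hcoeff (by simp [h0])
  have hdeg : g.natDegree = k' := le_antisymm hd1 (Polynomial.le_natDegree_of_ne_zero hcoeff)
  refine ⟨Polynomial.X ^ 2 * g, mul_ne_zero (pow_ne_zero _ Polynomial.X_ne_zero) hg0, ?_, ?_, ?_, ?_, ?_⟩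
  · rw [Polynomial.natDegree_mul (pow_ne_zero _ Polynomial.X_ne_zero) hg0,
      Polynomial.natDegree_X_pow, hdeg]
    omega
  · rw [Polynomial.leadingCoeff_mul, Polynomial.leadingCoeff_X_pow, one_mul,
      Polynomial.leadingCoeff, hdeg, hd2, hprodeq]
  · rw [mul_comm, Polynomial.coeff_mul_X_pow']
    norm_num
  · rw [mul_comm, Polynomial.coeff_mul_X_pow']
    norm_num
  · rw [map_mul, map_pow, Polynomial.aeval_X, ← hkey, sq]
    simp [mul_assoc]
end

section
/- Let g ≥ 1 and let F be the free group on 2g generators x₁, …, x_g, y₁, …, y_g. For any 1 ≤ k ≤ g, the element δ_k = [x₁,y₁]·[x₂,y₂]·⋯·[x_k,y_k] (product of commutators) lies in the commutator subgroup ⁅F,F⁆ but does not lie in ⁅F,⁅F,F⁆⁆, the third term of the lower central series of F (lowerCentralSeries F 2 in Lean's indexing). -/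
open scoped commutatorElement

lemma q8_comm : ∀ x y h : QuaternionGroup 2, h * ⁅x,y⁆ = ⁅x,y⁆ * h := by decide

lemma q8_lcs2 : (⊤ : Subgroup (QuaternionGroup 2)).lowerCentralSeries 2 = ⊥ := by
  apply lowerCentralSeries_succ_eq_bot
  rw [lowerCentralSeries_one, commutator_def, Subgroup.commutator_le]
  intro a _ b _
  exact Subgroup.mem_center_iff.mpr (fun h => q8_comm a b h)

lemma q8_ne : ⁅(QuaternionGroup.a 1 : QuaternionGroup 2), (QuaternionGroup.xa 0 : QuaternionGroup 2)⁆ ≠ 1 := by decide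

/-- In the free group on `2g` generators `x₁,…,x_g,y₁,…,y_g`, the element
`δ_k = [x₁,y₁]⋯[x_k,y_k]` (for `1 ≤ k ≤ g`) lies in the commutator subgroup but not in
the third term `⁅F,⁅F,F⁆⁆` of the lower central series. -/
theorem prod_commutators_mem_commutator_not_mem_lcs
    (g k : ℕ) (hg : 1 ≤ g) (hk : 1 ≤ k) (hkg : k ≤ g) :
    (List.ofFn (fun i : Fin k =>
        ⁅(FreeGroup.of (Sum.inl (Fin.castLE hkg i)) : FreeGroup (Fin g ⊕ Fin g)),
          FreeGroup.of (Sum.inr (Fin.castLE hkg i))⁆)).prod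
        ∈ commutator (FreeGroup (Fin g ⊕ Fin g)) ∧
    (List.ofFn (fun i : Fin k =>
        ⁅(FreeGroup.of (Sum.inl (Fin.castLE hkg i)) : FreeGroup (Fin g ⊕ Fin g)),
          FreeGroup.of (Sum.inr (Fin.castLE hkg i))⁆)).prod
        ∉ (⊤ : Subgroup (FreeGroup (Fin g ⊕ Fin g))).lowerCentralSeries 2 := by
  constructor
  · apply Subgroup.list_prod_mem
    intro x hx
    simp only [List.mem_ofFn, Set.mem_range] at hx
    obtain ⟨i, rfl⟩ := hx
    rw [commutator_def]
    exact Subgroup.commutator_mem_commutator (Subgroup.mem_top _) (Subgroup.mem_top _)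
  · intro hmem
    -- the homomorphism to Q8
    set f : Fin g ⊕ Fin g → QuaternionGroup 2 := fun s =>
      match s with
      | .inl i => if i.val = 0 then QuaternionGroup.a 1 else 1
      | .inr i => if i.val = 0 then QuaternionGroup.xa 0 else 1 with hf
    set φ : FreeGroup (Fin g ⊕ Fin g) →* QuaternionGroup 2 := FreeGroup.lift f with hφ
    have h1 : φ ((List.ofFn (fun i : Fin k =>
        ⁅(FreeGroup.of (Sum.inl (Fin.castLE hkg i)) : FreeGroup (Fin g ⊕ Fin g)),
          FreeGroup.of (Sum.inr (Fin.castLE hkg i))⁆)).prod) = 1 := by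
      have := lowerCentralSeries.map φ 2
      have h2 := this (Subgroup.mem_map_of_mem φ hmem)
      rw [q8_lcs2] at h2
      exact h2
    obtain ⟨m, rfl⟩ : ∃ m, k = m + 1 := ⟨k - 1, (Nat.succ_pred_eq_of_pos hk).symm⟩
    rw [map_list_prod, List.map_ofFn, List.ofFn_succ] at h1
    simp only [Function.comp] at h1
    rw [List.prod_cons] at h1
    have htail : (List.ofFn fun i : Fin m => φ ⁅(FreeGroup.of (Sum.inl (Fin.castLE hkg i.succ)) : FreeGroup (Fin g ⊕ Fin g)), FreeGroup.of (Sum.inr (Fin.castLE hkg i.succ))⁆).prod = 1 := by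
      apply List.prod_eq_one
      intro x hx
      simp only [List.mem_ofFn, Set.mem_range] at hx
      obtain ⟨i, rfl⟩ := hx
      rw [map_commutatorElement, hφ, FreeGroup.lift_apply_of, FreeGroup.lift_apply_of, hf]
      simp [Fin.val_succ]
    rw [htail, mul_one, map_commutatorElement, hφ, FreeGroup.lift_apply_of, FreeGroup.lift_apply_of, hf] at h1
    simp only [Fin.castLE, Fin.val_zero, if_pos rfl] at h1
    exact q8_ne h1
end

section
/- Let g ≥ 1 and let F be the free group on 2g generators x₁, …, x_g, y₁, …, y_g. For any 1 ≤ k ≤ g, the element δ_k = [x₁,y₁]·[x₂,y₂]·⋯·[x_k,y_k] does not lie in the second derived subgroup ⁅⁅F,F⁆,⁅F,F⁆⁆ of F. -/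
open scoped commutatorElement

private def fgen (g : ℕ) : Fin g ⊕ Fin g → Equiv.Perm (Fin 3)
  | Sum.inl i => if (i : ℕ) = 0 then Equiv.swap 0 1 else 1
  | Sum.inr i => if (i : ℕ) = 0 then Equiv.swap 0 2 else 1

lemma second_derived_perm3 :
    ⁅commutator (Equiv.Perm (Fin 3)), commutator (Equiv.Perm (Fin 3))⁆ = ⊥ := by
  rw [eq_bot_iff, Subgroup.commutator_le]
  intro h hh k hk
  have h1 : Equiv.Perm.sign h = 1 :=
    Abelianization.commutator_subset_ker Equiv.Perm.sign hh
  have k1 : Equiv.Perm.sign k = 1 :=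
    Abelianization.commutator_subset_ker Equiv.Perm.sign hk
  rw [Subgroup.mem_bot, commutatorElement_def]
  clear hh hk
  revert h k
  decide

/-- In the free group on `2g` generators `x₁,…,x_g,y₁,…,y_g`, the element
`δ_k = [x₁,y₁]⋯[x_k,y_k]` (for `1 ≤ k ≤ g`) does not lie in the second derived
subgroup `⁅⁅F,F⁆,⁅F,F⁆⁆`. -/
theorem prod_commutators_not_mem_second_derived
    (g k : ℕ) (hg : 1 ≤ g) (hk : 1 ≤ k) (hkg : k ≤ g) :
    (List.ofFn (fun i : Fin k =>
        ⁅(FreeGroup.of (Sum.inl (Fin.castLE hkg i)) : FreeGroup (Fin g ⊕ Fin g)),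
          FreeGroup.of (Sum.inr (Fin.castLE hkg i))⁆)).prod
        ∉ ⁅commutator (FreeGroup (Fin g ⊕ Fin g)),
            commutator (FreeGroup (Fin g ⊕ Fin g))⁆ := by
  intro hmem
  set φ := FreeGroup.lift (fgen g) with hφ
  have himg : φ ((List.ofFn (fun i : Fin k =>
        ⁅(FreeGroup.of (Sum.inl (Fin.castLE hkg i)) : FreeGroup (Fin g ⊕ Fin g)),
          FreeGroup.of (Sum.inr (Fin.castLE hkg i))⁆)).prod)
      ∈ ⁅commutator (Equiv.Perm (Fin 3)), commutator (Equiv.Perm (Fin 3))⁆ := by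
    have h1 : Subgroup.map φ ⁅commutator (FreeGroup (Fin g ⊕ Fin g)),
        commutator (FreeGroup (Fin g ⊕ Fin g))⁆
        ≤ ⁅commutator (Equiv.Perm (Fin 3)), commutator (Equiv.Perm (Fin 3))⁆ := by
      rw [Subgroup.map_commutator]
      apply Subgroup.commutator_mono <;>
      · rw [commutator_def, Subgroup.map_commutator]
        exact Subgroup.commutator_mono le_top le_top
    exact h1 ⟨_, hmem, rfl⟩
  rw [second_derived_perm3, Subgroup.mem_bot] at himg
  obtain ⟨n, rfl⟩ : ∃ n, k = n + 1 := ⟨k - 1, (Nat.succ_pred_eq_of_pos hk).symm⟩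
  rw [map_list_prod, List.map_ofFn, List.ofFn_succ] at himg
  simp [hφ, Function.comp, fgen, Fin.coe_castLE, commutatorElement_def,
    List.prod_cons, Nat.succ_ne_zero] at himg
  exact absurd himg (by decide)
end

section
/- Let H be a finitely generated free abelian group, R = ℤ[H] its integral group ring, ε : R → ℤ the augmentation homomorphism, I = ker ε the augmentation ideal, and let x ↦ x̄ be the involution of R induced by h ↦ h⁻¹ on H. Let M be a free R-module with a finite basis s₁, …, s_N, and let B : M × M → R be additive in each variable and conjugate-linear in the second variable, i.e. B(x, r·y) = r̄·B(x, y) for all r ∈ R. Assume that for every index j₀ ∈ {1, …, N} there exists x ∈ M such that ε(B(x, s_j)) = 0 for all j ≠ j₀ and ε(B(x, s_{j₀})) ≠ 0. Then for every n ≥ 0 and every y ∈ M: B(x, y) ∈ Iⁿ for all x ∈ M if and only if y ∈ Iⁿ·M (the submodule of M spanned by products of elements of Iⁿ with elements of M). -/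
open AddMonoidAlgebra

/-- The involution of the integral group ring `ℤ[H]` of an additive group `H` sending each
group element `h` to `-h`, extended ℤ-linearly. -/
noncomputable def addGroupRingConj {H : Type*} [AddCommGroup H]
    (r : AddMonoidAlgebra ℤ H) : AddMonoidAlgebra ℤ H :=
  AddMonoidAlgebra.ofCoeff (Finsupp.mapDomain (fun h : H => -h) r.coeff)

namespace AugSat

variable {H : Type*} [AddCommGroup H]

/-- conjugation as a ring hom -/
noncomputable def conjRH (H : Type*) [AddCommGroup H] :
    AddMonoidAlgebra ℤ H →+* AddMonoidAlgebra ℤ H :=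
  AddMonoidAlgebra.mapDomainRingHom ℤ (AddMonoidHom.mk' (fun h : H => -h) (fun a b => neg_add a b))

lemma conjRH_apply (r : AddMonoidAlgebra ℤ H) : conjRH H r = addGroupRingConj r := rfl

lemma conj_conj (r : AddMonoidAlgebra ℤ H) :
    addGroupRingConj (addGroupRingConj r) = r := by
  unfold addGroupRingConj
  rw [AddMonoidAlgebra.coeff_ofCoeff, ← Finsupp.mapDomain_comp]
  simp [Function.comp_def]

variable (ε : AddMonoidAlgebra ℤ H →+* ℤ) (hε : ∀ h : H, ε (AddMonoidAlgebra.single h 1) = 1)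
lemma degree_add (a b : ι →₀ ℕ) : (a + b).degree = a.degree + b.degree := by
  simp only [Finsupp.degree_eq_weight_one, map_add]

lemma degree_single (i : ι) (k : ℕ) : (Finsupp.single i k).degree = k := by
  simp only [Finsupp.degree_eq_weight_one, Finsupp.weight_apply]
  rw [Finsupp.sum_single_index] <;> simp

section AugSatEps
include hε

lemma eps_single (h : H) (c : ℤ) : ε (AddMonoidAlgebra.single h c) = c := by
  have : (AddMonoidAlgebra.single h c : AddMonoidAlgebra ℤ H)
      = c • AddMonoidAlgebra.single h 1 := by
    rw [AddMonoidAlgebra.smul_single]; norm_num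
  rw [this, map_zsmul, hε, smul_eq_mul, mul_one]

lemma eps_conj (r : AddMonoidAlgebra ℤ H) : ε (addGroupRingConj r) = ε r := by
  rw [← conjRH_apply]
  have : ε.comp (conjRH H) = ε := by
    apply AddMonoidAlgebra.ringHom_ext
    · intro c
      simp only [RingHom.comp_apply, conjRH_apply]
      unfold addGroupRingConj
      rw [AddMonoidAlgebra.coeff_single, Finsupp.mapDomain_single, AddMonoidAlgebra.ofCoeff_single, neg_zero]
    · intro h
      simp only [RingHom.comp_apply, conjRH_apply]
      unfold addGroupRingConj
      rw [AddMonoidAlgebra.coeff_single, Finsupp.mapDomain_single, AddMonoidAlgebra.ofCoeff_single, hε, hε]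
  exact RingHom.congr_fun this r

lemma conj_mem_pow {r : AddMonoidAlgebra ℤ H} {n : ℕ} (hr : r ∈ RingHom.ker ε ^ n) :
    addGroupRingConj r ∈ RingHom.ker ε ^ n := by
  have hmap : Ideal.map (conjRH H) (RingHom.ker ε) ≤ RingHom.ker ε := by
    rw [Ideal.map_le_iff_le_comap]
    intro z hz
    simp only [Ideal.mem_comap, RingHom.mem_ker] at hz ⊢
    rw [conjRH_apply, eps_conj ε hε]
    exact hz
  have : addGroupRingConj r ∈ Ideal.map (conjRH H) (RingHom.ker ε ^ n) := by
    rw [← conjRH_apply]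
    exact Ideal.mem_map_of_mem _ hr
  rw [Ideal.map_pow] at this
  exact Ideal.pow_right_mono hmap n this


/-- generator of the augmentation ideal -/
noncomputable def gg (h : H) : AddMonoidAlgebra ℤ H := AddMonoidAlgebra.single h 1 - 1

lemma gg_mem (h : H) : gg h ∈ RingHom.ker ε := by
  simp [RingHom.mem_ker, gg, map_sub, hε h]

lemma eps_eq_sum (z : AddMonoidAlgebra ℤ H) : ε z = z.coeff.sum fun _ c => c := by
  conv_lhs => rw [← z.sum_coeff_single]
  rw [map_finsuppSum]
  exact Finsupp.sum_congr fun h _ => eps_single ε hε h (z.coeff h)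

lemma mem_span_gg {z : AddMonoidAlgebra ℤ H} (hz : z ∈ RingHom.ker ε) :
    z ∈ Submodule.span ℤ (Set.range (gg (H := H))) := by
  have hz0 : z.coeff.sum (fun _ c => c) = 0 := by
    rw [← eps_eq_sum ε hε]; exact hz
  have hrepr : z = z.coeff.sum fun h c => c • gg h := by
    have h1 : (z.coeff.sum fun h c => c • gg h)
        = (z.coeff.sum fun h c => c • (AddMonoidAlgebra.single h 1 : AddMonoidAlgebra ℤ H))
          - z.coeff.sum fun _ c => c • (1 : AddMonoidAlgebra ℤ H) := by
      rw [← Finsupp.sum_sub]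
      exact Finsupp.sum_congr fun h _ => by rw [gg, smul_sub]
    have h2 : (z.coeff.sum fun h c => c • (AddMonoidAlgebra.single h 1 : AddMonoidAlgebra ℤ H)) = z := by
      conv_rhs => rw [← z.sum_coeff_single]
      exact Finsupp.sum_congr fun h _ => by rw [AddMonoidAlgebra.smul_single, smul_eq_mul, mul_one]
    have h3 : (z.coeff.sum fun _ c => c • (1 : AddMonoidAlgebra ℤ H))
        = (z.coeff.sum fun _ c => c) • (1 : AddMonoidAlgebra ℤ H) := by
      rw [Finsupp.sum, Finsupp.sum, Finset.sum_smul]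
    rw [h1, h2, h3, hz0, zero_smul, sub_zero]
  rw [hrepr]
  exact Submodule.sum_mem _ fun h _ =>
    Submodule.smul_mem _ _ (Submodule.subset_span (Set.mem_range_self h))


end AugSatEps

section Free

variable (H)
variable [Module.Free ℤ H] [Module.Finite ℤ H]

local notation "ιH" => Module.Free.ChooseBasisIndex ℤ H
local notation "P" => MvPowerSeries (Module.Free.ChooseBasisIndex ℤ H) ℤ

lemma isUnit_one_add_X (i : ιH) : IsUnit ((1 : P) + MvPowerSeries.X i) :=
  MvPowerSeries.isUnit_iff_constantCoeff.mpr (by simp)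

/-- the units 1 + Xᵢ -/
noncomputable def uu (i : ιH) : Pˣ := (isUnit_one_add_X H i).unit

lemma uu_coe (i : ιH) : ((uu H i : Pˣ) : P) = 1 + MvPowerSeries.X i :=
  (isUnit_one_add_X H i).unit_spec

/-- the Magnus homomorphism on group elements -/
noncomputable def psi : Multiplicative H →* Pˣ where
  toFun h := ∏ i, uu H i ^ ((Module.Free.chooseBasis ℤ H).repr h.toAdd i)
  map_one' := by simp
  map_mul' h h' := by
    simp only [toAdd_mul, map_add, Finsupp.add_apply, zpow_add, Finset.prod_mul_distrib]

/-- the Magnus embedding -/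
noncomputable def Phi : AddMonoidAlgebra ℤ H →ₐ[ℤ] P :=
  AddMonoidAlgebra.lift ℤ _ H ((Units.coeHom P).comp (psi H))

lemma Phi_single (h : H) :
    Phi H (AddMonoidAlgebra.single h 1) = ((psi H (Multiplicative.ofAdd h) : Pˣ) : P) := by
  rw [Phi, AddMonoidAlgebra.lift_single]; exact one_smul _ _

lemma constantCoeff_psi (h : Multiplicative H) :
    MvPowerSeries.constantCoeff (σ := ιH) (R := ℤ) ((psi H h : Pˣ) : P) = 1 := by
  have key : ∀ i : ιH, Units.map (MvPowerSeries.constantCoeff (σ := ιH) (R := ℤ)).toMonoidHom (uu H i) = 1 := by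
    intro i
    apply Units.ext
    rw [Units.coe_map]
    show MvPowerSeries.constantCoeff (σ := ιH) (R := ℤ) ((uu H i : Pˣ) : P) = ((1 : ℤˣ) : ℤ)
    rw [uu_coe]
    simp
  have h1 : Units.map (MvPowerSeries.constantCoeff (σ := ιH) (R := ℤ)).toMonoidHom (psi H h) = 1 := by
    rw [psi]
    simp only [MonoidHom.coe_mk, OneHom.coe_mk, map_prod, map_zpow, key, one_zpow,
      Finset.prod_const_one]
  calc MvPowerSeries.constantCoeff (σ := ιH) (R := ℤ) ((psi H h : Pˣ) : P)
      = ((Units.map (MvPowerSeries.constantCoeff (σ := ιH) (R := ℤ)).toMonoidHom (psi H h) : ℤˣ) : ℤ) := by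
        rw [Units.coe_map]; rfl
    _ = 1 := by rw [h1]; rfl

lemma constantCoeff_Phi (ε : AddMonoidAlgebra ℤ H →+* ℤ)
    (hε : ∀ h : H, ε (AddMonoidAlgebra.single h 1) = 1) (z : AddMonoidAlgebra ℤ H) :
    MvPowerSeries.constantCoeff (σ := ιH) (R := ℤ) (Phi H z) = ε z := by
  have key : ((MvPowerSeries.constantCoeff (σ := ιH) (R := ℤ)).comp
      (Phi H : AddMonoidAlgebra ℤ H →+* P)) = ε := by
    apply AddMonoidAlgebra.ringHom_ext
    · intro c
      have h0 : (AddMonoidAlgebra.single (0:H) c : AddMonoidAlgebra ℤ H)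
          = c • (1 : AddMonoidAlgebra ℤ H) := by
        rw [AddMonoidAlgebra.one_def, AddMonoidAlgebra.smul_single]; norm_num
      rw [RingHom.comp_apply, RingHom.coe_coe, h0, map_zsmul, map_zsmul, map_one, map_one]
      simp
    · intro h
      rw [RingHom.comp_apply, RingHom.coe_coe, Phi_single, constantCoeff_psi, eps_single ε hε]
  exact RingHom.congr_fun key z

variable {H}

/-- all coefficients in degree `< n` vanish -/
def lowcoeff (n : ℕ) (f : P) : Prop :=
  ∀ γ : ιH →₀ ℕ, γ.degree < n → MvPowerSeries.coeff (R := ℤ) γ f = 0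

lemma lowcoeff_mul {m k : ℕ} {f g : P} (hf : lowcoeff m f) (hg : lowcoeff k g) :
    lowcoeff (m + k) (f * g) := by
  intro γ hγ
  classical
  rw [MvPowerSeries.coeff_mul]
  apply Finset.sum_eq_zero
  rintro ⟨a, b⟩ hab
  rw [Finset.HasAntidiagonal.mem_antidiagonal] at hab
  have hdeg : a.degree + b.degree < m + k := by
    rw [← degree_add, hab]; exact hγ
  rcases lt_or_ge a.degree m with h | h
  · rw [hf a h, zero_mul]
  · have hb : b.degree < k := by omega
    rw [hg b hb, mul_zero]

lemma Phi_ker_lowcoeff (ε : AddMonoidAlgebra ℤ H →+* ℤ)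
    (hε : ∀ h : H, ε (AddMonoidAlgebra.single h 1) = 1)
    {z : AddMonoidAlgebra ℤ H} (hz : z ∈ RingHom.ker ε) : lowcoeff 1 (Phi H z) := by
  intro γ hγ
  have hγ0 : γ = 0 := by
    rw [← Finsupp.degree_eq_zero_iff]; omega
  rw [hγ0, MvPowerSeries.coeff_zero_eq_constantCoeff_apply, constantCoeff_Phi H ε hε]
  exact hz

lemma Phi_pow_lowcoeff (ε : AddMonoidAlgebra ℤ H →+* ℤ)
    (hε : ∀ h : H, ε (AddMonoidAlgebra.single h 1) = 1) {n : ℕ} :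
    ∀ z ∈ RingHom.ker ε ^ n, lowcoeff n (Phi H z) := by
  induction n with
  | zero => intro z _ γ hγ; omega
  | succ n ih =>
    intro z hz
    rw [pow_succ] at hz
    refine Submodule.mul_induction_on hz ?_ ?_
    · intro a ha b hb
      rw [map_mul]
      exact lowcoeff_mul (ih a ha) (Phi_ker_lowcoeff ε hε hb)
    · intro x y hx hy γ hγ
      rw [map_add, map_add, hx γ hγ, hy γ hγ, add_zero]

/-- products of augmentation generators indexed by a multi-index -/
noncomputable def pp (α : ιH →₀ ℕ) : AddMonoidAlgebra ℤ H :=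
  α.prod fun i k => gg (Module.Free.chooseBasis ℤ H i) ^ k

lemma pp_zero : pp (H := H) 0 = 1 := Finsupp.prod_zero_index

lemma pp_addone (α : ιH →₀ ℕ) (i : ιH) :
    pp (H := H) (α + Finsupp.single i 1)
      = pp α * gg (Module.Free.chooseBasis ℤ H i) := by
  rw [pp, Finsupp.prod_add_index' (fun j => pow_zero _) (fun j a b => pow_add _ a b),
    Finsupp.prod_single_index (h := fun j k => gg ((Module.Free.chooseBasis ℤ H) j) ^ k)
      (pow_zero _), pow_one]
  rfl

lemma pp_single_add (i : ιH) (k : ℕ) (α : ιH →₀ ℕ) :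
    pp (H := H) (Finsupp.single i k + α)
      = gg (Module.Free.chooseBasis ℤ H i) ^ k * pp α := by
  rw [pp, Finsupp.prod_add_index' (fun j => pow_zero _) (fun j a b => pow_add _ a b),
    Finsupp.prod_single_index (h := fun j k => gg ((Module.Free.chooseBasis ℤ H) j) ^ k)
      (pow_zero _)]
  rfl

lemma Phi_gg (i : ιH) :
    Phi H (gg (Module.Free.chooseBasis ℤ H i)) = MvPowerSeries.X i := by
  classical
  rw [gg, map_sub, map_one, Phi_single]
  have hpsi : psi H (Multiplicative.ofAdd (Module.Free.chooseBasis ℤ H i)) = uu H i := by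
    rw [psi]
    simp only [MonoidHom.coe_mk, OneHom.coe_mk]
    rw [Finset.prod_eq_single i]
    · simp
    · intro j _ hj
      simp [Finsupp.single_eq_of_ne hj]
    · intro hi; exact absurd (Finset.mem_univ i) hi
  rw [hpsi, uu_coe, add_sub_cancel_left]

lemma Phi_pp (α : ιH →₀ ℕ) :
    Phi H (pp α) = MvPowerSeries.monomial (R := ℤ) α 1 := by
  classical
  induction α using Finsupp.induction with
  | zero => rw [pp_zero, map_one]; exact (MvPowerSeries.monomial_zero_one (σ := ιH) (R := ℤ)).symm
  | single_add i k f hif hk ih =>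
    rw [pp_single_add, map_mul, map_pow, Phi_gg, ih, MvPowerSeries.X_pow_eq,
      MvPowerSeries.monomial_mul_monomial, one_mul]

lemma pp_mem (ε : AddMonoidAlgebra ℤ H →+* ℤ)
    (hε : ∀ h : H, ε (AddMonoidAlgebra.single h 1) = 1) (α : ιH →₀ ℕ) :
    pp (H := H) α ∈ RingHom.ker ε ^ α.degree := by
  classical
  induction α using Finsupp.induction with
  | zero => rw [pp_zero, map_zero, pow_zero, Ideal.one_eq_top]; trivial
  | single_add i k f hif hk ih =>
    rw [pp_single_add, degree_add, degree_single, pow_add]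
    exact Ideal.mul_mem_mul (Ideal.pow_mem_pow (gg_mem ε hε _) k) ih

set_option synthInstance.maxHeartbeats 1000000 in
lemma ggB (ε : AddMonoidAlgebra ℤ H →+* ℤ)
    (hε : ∀ h : H, ε (AddMonoidAlgebra.single h 1) = 1) (h : H) :
    gg h - ∑ i, ((Module.Free.chooseBasis ℤ H).repr h i) •
        gg (Module.Free.chooseBasis ℤ H i) ∈ RingHom.ker ε ^ 2 := by
  classical
  set K := RingHom.ker ε with hK
  set β := Module.Free.chooseBasis ℤ H with hβ
  let mk := Ideal.Quotient.mk (K ^ 2)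
  have hadd : ∀ a b : H, mk (gg (a + b)) = mk (gg a) + mk (gg b) := by
    intro a b
    have e0 : (AddMonoidAlgebra.single (a + b) 1 : AddMonoidAlgebra ℤ H)
        = AddMonoidAlgebra.single a 1 * AddMonoidAlgebra.single b 1 := by
      rw [AddMonoidAlgebra.single_mul_single, one_mul]
    have e1 : mk (gg (a + b)) = mk (gg a + gg b) := by
      rw [Ideal.Quotient.mk_eq_mk_iff_sub_mem]
      have e2 : gg (a + b) - (gg a + gg b) = gg a * gg b := by
        simp only [gg]; rw [e0]; ring
      rw [e2, sq]
      exact Ideal.mul_mem_mul (gg_mem ε hε a) (gg_mem ε hε b)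
    rw [e1, map_add]
  let φ : H →+ (AddMonoidAlgebra ℤ H ⧸ K ^ 2) :=
    AddMonoidHom.mk' (fun a => mk (gg a)) hadd
  have key : mk (gg h) = mk (∑ i, (β.repr h i) • gg (β i)) := by
    have h1 : φ h = φ (∑ i, (β.repr h i) • β i) := by rw [β.sum_repr h]
    have h2 : φ (∑ i, (β.repr h i) • β i) = ∑ i, (β.repr h i) • φ (β i) := by
      rw [map_sum]
      exact Finset.sum_congr rfl fun i _ => map_zsmul φ _ _
    have h3 : (∑ i, (β.repr h i) • φ (β i)) = mk (∑ i, (β.repr h i) • gg (β i)) := by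
      rw [map_sum]
      exact Finset.sum_congr rfl fun i _ => (map_zsmul mk _ _).symm
    exact h1.trans (h2.trans h3)
  rw [← Ideal.Quotient.mk_eq_mk_iff_sub_mem] at *
  exact key

lemma mul_gen (ε : AddMonoidAlgebra ℤ H →+* ℤ)
    (hε : ∀ h : H, ε (AddMonoidAlgebra.single h 1) = 1) (n : ℕ) {s b : AddMonoidAlgebra ℤ H}
    (hs : s ∈ Submodule.span ℤ (pp (H := H) '' {α | α.degree = n}))
    (hb : b ∈ RingHom.ker ε) :
    s * b ∈ Submodule.span ℤ (pp (H := H) '' {α | α.degree = n+1})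
      ⊔ Submodule.restrictScalars ℤ (RingHom.ker ε ^ (n+2)) := by
  classical
  set K := RingHom.ker ε with hK
  set β := Module.Free.chooseBasis ℤ H with hβ
  set T := Submodule.span ℤ (pp (H := H) '' {α | α.degree = n+1})
      ⊔ Submodule.restrictScalars ℤ (K ^ (n+2)) with hT
  induction hs using Submodule.span_induction with
  | mem s hsgen =>
    obtain ⟨α, hα, rfl⟩ := hsgen
    have hα' : α.degree = n := hα
    -- reduce b to the ℤ-span of the `gg h`
    suffices hinner : ∀ b', b' ∈ Submodule.span ℤ (Set.range (gg (H := H))) →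
        pp (H := H) α * b' ∈ T by
      exact hinner b (mem_span_gg ε hε hb)
    intro b' hb'
    induction hb' using Submodule.span_induction with
    | mem b hbgen =>
      obtain ⟨h, rfl⟩ := hbgen
      -- pp α * gg h
      have hBB := ggB ε hε h
      set t : AddMonoidAlgebra ℤ H := ∑ i, (β.repr h i) • gg (β i) with ht
      have split : pp (H := H) α * gg h = pp α * t + pp α * (gg h - t) := by ring
      have mem2 : pp (H := H) α * (gg h - t) ∈ K ^ (n+2) := by
        have : K ^ (n+2) = K ^ n * K ^ 2 := by rw [← pow_add]
        rw [this]
        exact Ideal.mul_mem_mul (hα' ▸ pp_mem ε hε α) hBB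
      have mem1 : pp (H := H) α * t ∈
          Submodule.span ℤ (pp (H := H) '' {α | α.degree = n+1}) := by
        rw [ht, Finset.mul_sum]
        refine Submodule.sum_mem _ fun i _ => ?_
        rw [mul_smul_comm, ← pp_addone]
        refine Submodule.smul_mem _ _ (Submodule.subset_span ⟨α + Finsupp.single i 1, ?_, rfl⟩)
        simp only [Set.mem_setOf_eq, degree_add, degree_single, hα']
      rw [split]
      exact Submodule.add_mem _ (Submodule.mem_sup_left mem1)
        (Submodule.mem_sup_right (Submodule.restrictScalars_mem _ _ _ |>.mpr mem2))
    | zero => rw [mul_zero]; exact Submodule.zero_mem _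
    | add x y hx hy ihx ihy => rw [mul_add]; exact Submodule.add_mem _ ihx ihy
    | smul a x hx ihx => rw [mul_smul_comm]; exact Submodule.smul_mem _ _ ihx
  | zero => rw [zero_mul]; exact Submodule.zero_mem _
  | add x y hx hy ihx ihy => rw [add_mul]; exact Submodule.add_mem _ ihx ihy
  | smul a x hx ihx => rw [smul_mul_assoc]; exact Submodule.smul_mem _ _ ihx

lemma claimA (ε : AddMonoidAlgebra ℤ H →+* ℤ)
    (hε : ∀ h : H, ε (AddMonoidAlgebra.single h 1) = 1) (n : ℕ) {z : AddMonoidAlgebra ℤ H}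
    (hz : z ∈ RingHom.ker ε ^ n) :
    z ∈ Submodule.span ℤ (pp (H := H) '' {α | α.degree = n})
      ⊔ Submodule.restrictScalars ℤ (RingHom.ker ε ^ (n+1)) := by
  induction n generalizing z with
  | zero =>
    have h1 : z - ε z • 1 ∈ RingHom.ker ε := by
      rw [RingHom.mem_ker, map_sub, map_zsmul, map_one]
      simp
    refine Submodule.mem_sup.mpr ⟨ε z • pp 0, ?_, z - ε z • 1, ?_, by rw [pp_zero]; abel⟩
    · exact Submodule.smul_mem _ _ (Submodule.subset_span
        ⟨0, by simp [map_zero], rfl⟩)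
    · rw [Submodule.restrictScalars_mem, zero_add, pow_one]
      exact h1
  | succ n ih =>
    rw [pow_succ] at hz
    refine Submodule.mul_induction_on hz ?_ fun x y hx hy => Submodule.add_mem _ hx hy
    intro a ha b hb
    obtain ⟨s, hs, w, hw, hswa⟩ := Submodule.mem_sup.mp (ih ha)
    rw [Submodule.restrictScalars_mem] at hw
    have hab : a * b = s * b + w * b := by rw [← hswa]; ring
    rw [hab]
    refine Submodule.add_mem _ (mul_gen ε hε n hs hb) (Submodule.mem_sup_right ?_)
    rw [Submodule.restrictScalars_mem]
    have : RingHom.ker ε ^ (n+2) = RingHom.ker ε ^ (n+1) * RingHom.ker ε := by rw [← pow_succ]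
    rw [this]
    exact Ideal.mul_mem_mul hw hb

lemma coeff_lincomb (γ : ιH →₀ ℕ) (c : (ιH →₀ ℕ) →₀ ℤ) (hγ : γ ∈ c.support) :
    MvPowerSeries.coeff (R := ℤ) γ (Phi H (Finsupp.linearCombination ℤ (pp (H := H)) c)) = c γ := by
  classical
  rw [Finsupp.linearCombination_apply, Finsupp.sum, map_sum, map_sum]
  rw [Finset.sum_eq_single γ]
  · rw [map_zsmul, map_zsmul, Phi_pp, MvPowerSeries.coeff_monomial, if_pos rfl,
      smul_eq_mul, mul_one]
  · intro j _ hj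
    rw [map_zsmul, map_zsmul, Phi_pp, MvPowerSeries.coeff_monomial, if_neg (fun e => hj e.symm),
      smul_zero]
  · intro hγ'; exact absurd hγ hγ'

/-- Saturation: `Iⁿ/Iⁿ⁺¹` is torsion-free. -/
lemma sat (ε : AddMonoidAlgebra ℤ H →+* ℤ)
    (hε : ∀ h : H, ε (AddMonoidAlgebra.single h 1) = 1) (n : ℕ) (d : ℤ) (hd : d ≠ 0)
    {z : AddMonoidAlgebra ℤ H} (hz : z ∈ RingHom.ker ε ^ n)
    (hdz : d • z ∈ RingHom.ker ε ^ (n+1)) : z ∈ RingHom.ker ε ^ (n+1) := by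
  classical
  obtain ⟨s, hs, w, hw, hswz⟩ := Submodule.mem_sup.mp (claimA ε hε n hz)
  rw [Submodule.restrictScalars_mem] at hw
  rw [Finsupp.mem_span_image_iff_linearCombination] at hs
  obtain ⟨c, hcsupp, rfl⟩ := hs
  rw [Finsupp.mem_supported] at hcsupp
  have hcoeffz : ∀ γ : ιH →₀ ℕ, γ.degree = n →
      MvPowerSeries.coeff (R := ℤ) γ (Phi H z) = 0 := by
    intro γ hγ
    have h1 : MvPowerSeries.coeff (R := ℤ) γ (Phi H (d • z)) = 0 :=
      Phi_pow_lowcoeff ε hε _ hdz γ (by omega)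
    rw [map_zsmul, map_zsmul] at h1
    exact (smul_eq_zero.mp h1).resolve_left hd
  have hc0 : c = 0 := by
    ext γ
    by_cases hγ : γ ∈ c.support
    · have hγd : γ.degree = n := hcsupp hγ
      have e1 : MvPowerSeries.coeff (R := ℤ) γ (Phi H z)
          = c γ + MvPowerSeries.coeff (R := ℤ) γ (Phi H w) := by
        rw [← hswz, map_add, map_add, coeff_lincomb γ c hγ]
      have e2 : MvPowerSeries.coeff (R := ℤ) γ (Phi H w) = 0 :=
        Phi_pow_lowcoeff ε hε _ hw γ (by omega)
      have e3 := hcoeffz γ hγd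
      rw [e1, e2, add_zero] at e3
      exact e3
    · exact Finsupp.notMem_support_iff.mp hγ
  rw [hc0, map_zero, zero_add] at hswz
  rw [← hswz]
  exact hw

end Free



lemma mem_smul_top_iff {R M : Type*} [CommRing R] [AddCommGroup M] [Module R M]
    {κ : Type*} [Fintype κ] (b : Module.Basis κ R M) (J : Ideal R) (y : M) :
    y ∈ J • (⊤ : Submodule R M) ↔ ∀ j, b.repr y j ∈ J := by
  rw [← b.span_eq, Submodule.mem_ideal_smul_span_iff_exists_sum]
  constructor
  · rintro ⟨a, ha, rfl⟩ j
    have e : (a.sum fun i c => c • b i) = Finsupp.linearCombination R b a :=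
      (Finsupp.linearCombination_apply R a).symm
    rw [e, b.repr_linearCombination]
    exact ha j
  · intro hj
    refine ⟨b.repr y, hj, ?_⟩
    rw [← Finsupp.linearCombination_apply, b.linearCombination_repr]

end AugSat

/-- Filtered nondegeneracy of a sesquilinear form on a finite free module over the integral
group ring of a finitely generated free abelian group: assuming for each basis vector the
existence of a suitable "dual" element (with respect to the augmentation `ε`), an element
`y` pairs into `Iⁿ` with everything iff `y ∈ Iⁿ·M`, where `I = ker ε`. -/
theorem mem_pow_augmentation_smul_iff_form_mem_pow
    (H : Type*) [AddCommGroup H] [Module.Free ℤ H] [Module.Finite ℤ H]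
    (ε : AddMonoidAlgebra ℤ H →+* ℤ)
    (hε : ∀ h : H, ε (AddMonoidAlgebra.single h 1) = 1)
    (M : Type*) [AddCommGroup M] [Module (AddMonoidAlgebra ℤ H) M]
    (N : ℕ) (b : Module.Basis (Fin N) (AddMonoidAlgebra ℤ H) M)
    (B : M → M → AddMonoidAlgebra ℤ H)
    (hadd₁ : ∀ x x' y, B (x + x') y = B x y + B x' y)
    (hadd₂ : ∀ x y y', B x (y + y') = B x y + B x y')
    (hsesq : ∀ (x y : M) (r : AddMonoidAlgebra ℤ H),
      B x (r • y) = addGroupRingConj r * B x y)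
    (hdual : ∀ j₀ : Fin N, ∃ x : M,
      (∀ j, j ≠ j₀ → ε (B x (b j)) = 0) ∧ ε (B x (b j₀)) ≠ 0)
    (n : ℕ) (y : M) :
    (∀ x : M, B x y ∈ RingHom.ker ε ^ n) ↔
      y ∈ (RingHom.ker ε ^ n) • (⊤ : Submodule (AddMonoidAlgebra ℤ H) M) := by
  classical
  have hB0 : ∀ x : M, B x (0 : M) = 0 := by
    intro x
    have h1 := hsesq x 0 0
    rw [zero_smul] at h1
    have h2 : addGroupRingConj (0 : AddMonoidAlgebra ℤ H) = 0 := by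
      unfold addGroupRingConj; simp
    rw [h1, h2, zero_mul]
  have hBsum : ∀ (x : M) (s : Finset (Fin N)) (f : Fin N → M),
      B x (∑ j ∈ s, f j) = ∑ j ∈ s, B x (f j) := by
    intro x s f
    induction s using Finset.induction_on with
    | empty => simpa using hB0 x
    | @insert a s hjs ih => rw [Finset.sum_insert hjs, Finset.sum_insert hjs, hadd₂, ih]
  constructor
  · induction n with
    | zero =>
      intro _
      rw [pow_zero, Ideal.one_eq_top, Submodule.top_smul]
      exact Submodule.mem_top
    | succ n ih =>
      intro hB
      have hBn : ∀ x, B x y ∈ RingHom.ker ε ^ n := fun x =>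
        Ideal.pow_le_pow_right (Nat.le_succ n) (hB x)
      have hyn := ih hBn
      rw [AugSat.mem_smul_top_iff b] at hyn ⊢
      intro j₀
      obtain ⟨x₀, hx₀, hd⟩ := hdual j₀
      have hexp : B x₀ y = ∑ j, addGroupRingConj (b.repr y j) * B x₀ (b j) := by
        conv_lhs => rw [← b.sum_repr y]
        rw [hBsum]
        exact Finset.sum_congr rfl fun j _ => hsesq x₀ (b j) (b.repr y j)
      have hterm : addGroupRingConj (b.repr y j₀) * B x₀ (b j₀) ∈ RingHom.ker ε ^ (n+1) := by
        have hsum' : ∑ j ∈ Finset.univ.erase j₀,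
            addGroupRingConj (b.repr y j) * B x₀ (b j) ∈ RingHom.ker ε ^ (n+1) := by
          refine Submodule.sum_mem _ fun j hj => ?_
          have hjne : j ≠ j₀ := Finset.ne_of_mem_erase hj
          have h1 : addGroupRingConj (b.repr y j) ∈ RingHom.ker ε ^ n :=
            AugSat.conj_mem_pow ε hε (hyn j)
          have h2 : B x₀ (b j) ∈ RingHom.ker ε := by
            rw [RingHom.mem_ker]; exact hx₀ j hjne
          rw [pow_succ]
          exact Ideal.mul_mem_mul h1 h2
        have heq : addGroupRingConj (b.repr y j₀) * B x₀ (b j₀)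
            = B x₀ y - ∑ j ∈ Finset.univ.erase j₀,
                addGroupRingConj (b.repr y j) * B x₀ (b j) := by
          rw [hexp, ← Finset.add_sum_erase _ _ (Finset.mem_univ j₀)]
          ring
        rw [heq]
        exact sub_mem (hB x₀) hsum'
      set d := ε (B x₀ (b j₀)) with hdd
      have ha_d : B x₀ (b j₀) - d • 1 ∈ RingHom.ker ε := by
        rw [RingHom.mem_ker, map_sub, map_zsmul, map_one]
        simp [hdd]
      have hsm : d • addGroupRingConj (b.repr y j₀) ∈ RingHom.ker ε ^ (n+1) := by
        have heq : d • addGroupRingConj (b.repr y j₀)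
            = addGroupRingConj (b.repr y j₀) * B x₀ (b j₀)
              - addGroupRingConj (b.repr y j₀) * (B x₀ (b j₀) - d • 1) := by
          rw [mul_sub, mul_smul_comm, mul_one]
          ring
        rw [heq]
        refine sub_mem hterm ?_
        rw [pow_succ]
        exact Ideal.mul_mem_mul (AugSat.conj_mem_pow ε hε (hyn j₀)) ha_d
      have hconj : addGroupRingConj (b.repr y j₀) ∈ RingHom.ker ε ^ (n+1) :=
        AugSat.sat ε hε n d hd (AugSat.conj_mem_pow ε hε (hyn j₀)) hsm
      have hfin := AugSat.conj_mem_pow ε hε hconj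
      rwa [AugSat.conj_conj] at hfin
  · intro hy x
    refine Submodule.smul_induction_on hy ?_ ?_
    · intro r hr m _
      rw [hsesq]
      exact Ideal.mul_mem_right _ _ (AugSat.conj_mem_pow ε hε hr)
    · intro y₁ y₂ h1 h2
      rw [hadd₂]
      exact Submodule.add_mem _ h1 h2
end

section
/- Let H be a finitely generated free abelian group, R = ℤ[H] its integral group ring, ε : R → ℤ the augmentation homomorphism, and let x ↦ x̄ be the involution of R induced by h ↦ h⁻¹ on H. Let M be a free R-module with a finite basis s₁, …, s_N, and let B : M × M → R be additive in each variable and conjugate-linear in the second variable, i.e. B(x, r·y) = r̄·B(x, y) for all r ∈ R. Assume that for every index j₀ ∈ {1, …, N} there exists x ∈ M such that ε(B(x, s_j)) = 0 for all j ≠ j₀ and ε(B(x, s_{j₀})) ≠ 0. Then B is nondegenerate in the second variable: if y ∈ M satisfies B(x, y) = 0 for all x ∈ M, then y = 0. -/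
/-- Nondegeneracy of a sesquilinear form on a finite free module over the integral group
ring of a finitely generated free abelian group, assuming for each basis vector the
existence of a suitable "dual" element with respect to the augmentation `ε`. -/
theorem form_nondegenerate_of_dual_elements
    (H : Type*) [AddCommGroup H] [Module.Free ℤ H] [Module.Finite ℤ H]
    (ε : AddMonoidAlgebra ℤ H →+* ℤ)
    (hε : ∀ h : H, ε (AddMonoidAlgebra.single h 1) = 1)
    (M : Type*) [AddCommGroup M] [Module (AddMonoidAlgebra ℤ H) M]
    (N : ℕ) (b : Module.Basis (Fin N) (AddMonoidAlgebra ℤ H) M)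
    (B : M → M → AddMonoidAlgebra ℤ H)
    (hadd₁ : ∀ x x' y, B (x + x') y = B x y + B x' y)
    (hadd₂ : ∀ x y y', B x (y + y') = B x y + B x y')
    (hsesq : ∀ (x y : M) (r : AddMonoidAlgebra ℤ H),
      B x (r • y) = addGroupRingConj r * B x y)
    (hdual : ∀ j₀ : Fin N, ∃ x : M,
      (∀ j, j ≠ j₀ → ε (B x (b j)) = 0) ∧ ε (B x (b j₀)) ≠ 0)
    (y : M) (hy : ∀ x : M, B x y = 0) :
    y = 0 := by
  classical
  -- `H` has unique sums (it embeds in a `Finsupp` of `ℤ`)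
  haveI : UniqueSums H := by
    let b' := Module.Free.chooseBasis ℤ H
    exact UniqueSums.of_injective_addHom b'.repr.toLinearMap.toAddMonoidHom.toAddHom
      b'.repr.injective inferInstance
  haveI : IsDomain (AddMonoidAlgebra ℚ H) := NoZeroDivisors.to_isDomain _
  haveI : AddMonoid.FG H :=
    AddGroup.fg_iff_addMonoid_fg.mp (Module.Finite.iff_addGroup_fg.mp ‹Module.Finite ℤ H›)
  haveI : IsNoetherianRing (AddMonoidAlgebra ℚ H) :=
    Algebra.FiniteType.isNoetherianRing ℚ (AddMonoidAlgebra ℚ H)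
  -- the coefficient-extension map ℤ[H] → ℚ[H]
  let φ : AddMonoidAlgebra ℤ H →+* AddMonoidAlgebra ℚ H :=
    (AddMonoidAlgebra.lift ℤ (AddMonoidAlgebra ℚ H) H (AddMonoidAlgebra.of ℚ H)).toRingHom
  -- the augmentation on ℚ[H]
  let εS : AddMonoidAlgebra ℚ H →+* ℚ := (AddMonoidAlgebra.lift ℚ ℚ H 1).toRingHom
  have hφ_single : ∀ (h : H) (m : ℤ),
      φ (AddMonoidAlgebra.single h m) = AddMonoidAlgebra.single h (m : ℚ) := by
    intro h m
    show (AddMonoidAlgebra.lift ℤ (AddMonoidAlgebra ℚ H) H (AddMonoidAlgebra.of ℚ H))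
        (AddMonoidAlgebra.single h m) = _
    rw [AddMonoidAlgebra.lift_single, AddMonoidAlgebra.of_apply]
    rw [zsmul_eq_mul, AddMonoidAlgebra.intCast_def, AddMonoidAlgebra.single_mul_single]
    simp
  have hεS_single : ∀ (h : H) (q : ℚ), εS (AddMonoidAlgebra.single h q) = q := by
    intro h q
    show (AddMonoidAlgebra.lift ℚ ℚ H 1) (AddMonoidAlgebra.single h q) = q
    rw [AddMonoidAlgebra.lift_single]
    simp
  have hε_single : ∀ (h : H) (m : ℤ), ε (AddMonoidAlgebra.single h m) = m := by
    intro h m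
    have h1 : (AddMonoidAlgebra.single h m : AddMonoidAlgebra ℤ H)
        = m • AddMonoidAlgebra.single h 1 := by
      simp [Finsupp.smul_single]
    rw [h1, map_zsmul, hε]
    simp
  have hcompat : ∀ r : AddMonoidAlgebra ℤ H, εS (φ r) = (ε r : ℚ) := by
    intro r
    induction r using AddMonoidAlgebra.induction_linear with
    | zero => simp
    | add f g hf hg => rw [map_add, map_add, hf, hg, map_add]; push_cast; ring
    | single h m => rw [hφ_single, hεS_single, hε_single]
  have hφ_inj : Function.Injective φ := by
    have hmr : ∀ r : AddMonoidAlgebra ℤ H,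
        (φ r).coeff = Finsupp.mapRange (fun z : ℤ => (z : ℚ)) (by simp) r.coeff := by
      intro r
      induction r using AddMonoidAlgebra.induction_linear with
      | zero => simp
      | add f g hf hg => rw [map_add, AddMonoidAlgebra.coeff_add, hf, hg, AddMonoidAlgebra.coeff_add,
          Finsupp.mapRange_add (by push_cast; simp)]
      | single h m => rw [hφ_single, AddMonoidAlgebra.coeff_single, AddMonoidAlgebra.coeff_single,
          Finsupp.mapRange_single]
    intro r s hrs
    have hrs := congrArg AddMonoidAlgebra.coeff hrs
    rw [hmr, hmr] at hrs
    exact AddMonoidAlgebra.coeff_injective (Finsupp.mapRange_injective _ (by simp)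
      (fun a c hac => by exact_mod_cast hac) hrs)
  -- the coordinates of y, conjugated
  set A : Fin N → AddMonoidAlgebra ℤ H := fun j => addGroupRingConj (b.repr y j) with hAdef
  -- main relation
  have hrel : ∀ x : M, ∑ j, A j * B x (b j) = 0 := by
    intro x
    let g : M →+ AddMonoidAlgebra ℤ H :=
      AddMonoidHom.mk' (fun z => B x z) (fun a c => hadd₂ x a c)
    have h1 : B x y = ∑ j, B x (b.repr y j • b j) := by
      conv_lhs => rw [← b.sum_repr y]
      exact map_sum g _ _
    have h2 : B x y = ∑ j, A j * B x (b j) := by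
      rw [h1]
      exact Finset.sum_congr rfl fun j _ => hsesq x (b j) (b.repr y j)
    rw [← h2, hy x]
  set I : Ideal (AddMonoidAlgebra ℚ H) := RingHom.ker εS with hIdef
  have hI_ne_top : I ≠ ⊤ := by
    rw [Ideal.ne_top_iff_one]
    simp [hIdef, RingHom.mem_ker]
  have key : ∀ n : ℕ, ∀ j, φ (A j) ∈ I ^ n := by
    intro n
    induction n with
    | zero => simp
    | succ n ih =>
      intro j₀
      obtain ⟨x, hx1, hx2⟩ := hdual j₀
      have rel : ∑ j, φ (A j) * φ (B x (b j)) = 0 := by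
        rw [← map_zero φ, ← hrel x, map_sum]
        exact Finset.sum_congr rfl fun j _ => (map_mul φ _ _).symm
      have hoff : ∀ j, j ≠ j₀ → φ (A j) * φ (B x (b j)) ∈ I ^ (n + 1) := by
        intro j hj
        have h1 : φ (B x (b j)) ∈ I := by
          rw [hIdef, RingHom.mem_ker, hcompat, hx1 j hj, Int.cast_zero]
        have := Ideal.mul_mem_mul (ih j) h1
        rwa [← pow_succ] at this
      have hd : φ (A j₀) * φ (B x (b j₀)) ∈ I ^ (n + 1) := by
        have hsplit : φ (A j₀) * φ (B x (b j₀))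
            = -∑ j ∈ Finset.univ.erase j₀, φ (A j) * φ (B x (b j)) := by
          have h7 := Finset.add_sum_erase Finset.univ
            (fun j => φ (A j) * φ (B x (b j))) (Finset.mem_univ j₀)
          rw [rel] at h7
          exact eq_neg_of_add_eq_zero_left h7
        rw [hsplit]
        exact neg_mem (Ideal.sum_mem _ fun j hj =>
          hoff j (Finset.ne_of_mem_erase hj))
      set m : ℚ := (ε (B x (b j₀)) : ℚ) with hmdef
      have hm : m ≠ 0 := by
        rw [hmdef]
        exact_mod_cast hx2
      have hv : φ (B x (b j₀)) - algebraMap ℚ (AddMonoidAlgebra ℚ H) m ∈ I := by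
        rw [hIdef, RingHom.mem_ker, map_sub, hcompat]
        have h8 : εS (algebraMap ℚ (AddMonoidAlgebra ℚ H) m) = m := by
          show (AddMonoidAlgebra.lift ℚ ℚ H 1) (algebraMap ℚ (AddMonoidAlgebra ℚ H) m) = m
          rw [AlgHom.commutes]
          simp
        rw [h8, hmdef]
        ring
      have h3 : φ (A j₀) * algebraMap ℚ (AddMonoidAlgebra ℚ H) m ∈ I ^ (n + 1) := by
        have h4 : φ (A j₀) * algebraMap ℚ (AddMonoidAlgebra ℚ H) m
            = φ (A j₀) * φ (B x (b j₀))
              - φ (A j₀) * (φ (B x (b j₀)) - algebraMap ℚ (AddMonoidAlgebra ℚ H) m) := by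
          ring
        rw [h4]
        refine sub_mem hd ?_
        have := Ideal.mul_mem_mul (ih j₀) hv
        rwa [← pow_succ] at this
      have h5 := Ideal.mul_mem_left (I ^ (n + 1)) (algebraMap ℚ (AddMonoidAlgebra ℚ H) m⁻¹) h3
      have h6 : algebraMap ℚ (AddMonoidAlgebra ℚ H) m⁻¹
          * (φ (A j₀) * algebraMap ℚ (AddMonoidAlgebra ℚ H) m) = φ (A j₀) := by
        rw [mul_comm (φ (A j₀)) (algebraMap ℚ (AddMonoidAlgebra ℚ H) m), ← mul_assoc, ← map_mul,
          inv_mul_cancel₀ hm, map_one, one_mul]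
      rwa [h6] at h5
  have hA0 : ∀ j, A j = 0 := by
    intro j
    apply hφ_inj
    rw [map_zero]
    have hmem : φ (A j) ∈ ⨅ n : ℕ, I ^ n := Submodule.mem_iInf _ |>.mpr fun n => key n j
    rwa [Ideal.iInf_pow_eq_bot_of_isDomain I hI_ne_top, Submodule.mem_bot] at hmem
  have hc0 : ∀ j, b.repr y j = 0 := by
    intro j
    have hinj : Function.Injective (addGroupRingConj (H := H)) :=
      fun r s h => AddMonoidAlgebra.coeff_injective (Finsupp.mapDomain_injective neg_injective
        (AddMonoidAlgebra.ofCoeff_injective h))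
    have h9 := hA0 j
    rw [hAdef] at h9
    exact hinj (by simpa [addGroupRingConj] using h9)
  have h10 : b.repr y = 0 := Finsupp.ext fun j => hc0 j
  have h11 := congrArg b.repr.symm h10
  simpa using h11
end
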